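/- arXiv:2311.05751 — 12 statements merged into one kernel-verified Lean document; each statement's English description precedes it below -/
import Mathlib

section
/- There exists a compact Hausdorff space K that supports no strictly positive measure (there is no Radon measure μ on K with μ(U) > 0 for every nonempty open U ⊆ K), yet no point of K avoids measures: for every x ∈ K there is a Radon measure μ on K with μ({x}) = 0 such that every open set containing x has positive μ-measure. (One such K is the one-point compactification of the disjoint union of ω₁ copies of the unit interval [0,1].) -/
open MeasureTheory Topology ENNReal NNReal

/-- A *Radon measure* on a topological space: a σ-additive Borel probability measure which is
inner regular with respect to compact sets and outer regular with respect to open sets. -/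
def IsRadon {X : Type*} [TopologicalSpace X] [MeasurableSpace X] (μ : Measure X) : Prop :=
  IsProbabilityMeasure μ ∧ μ.InnerRegularWRT IsCompact MeasurableSet ∧ μ.OuterRegular

/-- A point `x` *avoids measures* if for every Radon measure `μ` with `μ {x} = 0` there is an
open neighbourhood of `x` of measure zero. -/
def AvoidsMeasures {X : Type*} [TopologicalSpace X] [MeasurableSpace X] (x : X) : Prop :=
  ∀ μ : Measure X, IsRadon μ → μ {x} = 0 → ∃ U : Set X, IsOpen U ∧ x ∈ U ∧ μ U = 0

/-- A point `x` is a *μ-point* if it avoids all non-atomic Radon measures. -/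
def IsMuPoint {X : Type*} [TopologicalSpace X] [MeasurableSpace X] (x : X) : Prop :=
  ∀ μ : Measure X, IsRadon μ → (∀ y : X, μ {y} = 0) →
    ∃ U : Set X, IsOpen U ∧ x ∈ U ∧ μ U = 0

/-- A point `p` is a *weak P-point* if it is not in the closure of any countable subset of
`X \ {p}`. -/
def IsWeakPPoint {X : Type*} [TopologicalSpace X] (p : X) : Prop :=
  ∀ C : Set X, C.Countable → p ∉ C → p ∉ closure C

/-!
Take `K` to be the one-point compactification of `ι × [0,1]` with `ι` uncountable and discrete.
The sheets `{i} × [0,1]` are uncountably many pairwise disjoint nonempty open sets, and a finite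
measure charges only countably many of them. A point of a sheet lies in the support of Lebesgue
measure on that sheet, which has no atoms. An open neighbourhood of `∞` has compact complement,
so it contains all but finitely many sheets; hence `∞` lies in the support of `∑ 2⁻ⁿ⁻¹ λₙ`,
where `λₙ` is Lebesgue measure on the `n`-th of countably many distinct sheets, and this measure
vanishes at `∞`.
-/
open Measure Set Filter Function OnePoint

section Radon

variable {X Z : Type*} [TopologicalSpace X] [MeasurableSpace X] [BorelSpace X]
  [TopologicalSpace Z] [MeasurableSpace Z] [BorelSpace Z]

theorem isRadon_map [R1Space X] (ν : Measure Z) [IsProbabilityMeasure ν] [ν.InnerRegular]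
    {f : Z → X} (hf : Continuous f) : IsRadon (ν.map f) := by
  have : (ν.map f).InnerRegular := InnerRegular.map_of_continuous hf
  have : IsProbabilityMeasure (ν.map f) := isProbabilityMeasure_map hf.aemeasurable
  exact ⟨inferInstance, InnerRegular.innerRegular, inferInstance⟩

theorem map_pos_of_isOpen_of_mem (ν : Measure Z) [ν.IsOpenPosMeasure] {f : Z → X}
    (hf : Continuous f) {U : Set X} (hU : IsOpen U) {z : Z} (hz : f z ∈ U) :
    0 < ν.map f U := by
  rw [map_apply hf.measurable hU.measurableSet]
  exact (hU.preimage hf).measure_pos ν ⟨z, hz⟩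

end Radon

theorem ProbabilityTheory.geometricMeasure_singleton_ne_zero {p : unitInterval} (hp0 : p ≠ 0)
    (hp1 : p ≠ 1) (n : ℕ) : geometricMeasure p {n} ≠ 0 := by
  rw [geometricMeasure_singleton hp0, ENNReal.ofReal_ne_zero_iff]
  exact geometricMeasure_pos hp0 hp1 n

theorem exists_measure_eq_zero_of_pairwise_disjoint {X ι : Type*} [MeasurableSpace X]
    [Uncountable ι] (μ : Measure X) [IsFiniteMeasure μ] {s : ι → Set X}
    (hs : ∀ i, MeasurableSet (s i)) (hd : Pairwise (Disjoint on s)) : ∃ i, μ (s i) = 0 := by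
  by_contra! h
  have hcount := μ.countable_meas_pos_of_disjoint_of_meas_iUnion_ne_top hs hd (measure_ne_top _ _)
  have huniv : {i | 0 < μ (s i)} = univ := eq_univ_of_forall fun i ↦ pos_iff_ne_zero.2 (h i)
  exact not_countable (α := ι) (countable_univ_iff.1 (huniv ▸ hcount))

theorem isOpenPosMeasure_comap_subtype_val {X : Type*} [TopologicalSpace X] [MeasurableSpace X]
    (μ : Measure X) [μ.IsOpenPosMeasure] {s : Set X} (hs : MeasurableSet s)
    (hsi : s ⊆ closure (interior s)) : (μ.comap ((↑) : s → X)).IsOpenPosMeasure := by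
  refine ⟨fun U hU ⟨⟨x, hxs⟩, hxU⟩ ↦ ?_⟩
  obtain ⟨W, hW, rfl⟩ := isOpen_induced_iff.1 hU
  rw [(MeasurableEmbedding.subtype_coe hs).comap_apply, Subtype.image_preimage_coe]
  have hint : (interior s ∩ W).Nonempty :=
    (closure_inter_open_nonempty_iff hW).1 ⟨x, hsi hxs, hxU⟩
  exact fun h0 ↦ (isOpen_interior.inter hW).measure_ne_zero μ hint
    (measure_mono_null (inter_subset_inter_left W interior_subset) h0)

instance : (volume : Measure unitInterval).IsOpenPosMeasure :=
  isOpenPosMeasure_comap_subtype_val _ measurableSet_Icc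
    (by rw [interior_Icc, closure_Ioo zero_ne_one])

namespace OnePoint

variable {ι Y : Type*} [TopologicalSpace ι] [DiscreteTopology ι] [TopologicalSpace Y]

theorem eventually_cofinite_forall_coe_mem {U : Set (OnePoint (ι × Y))} (hU : IsOpen U)
    (hinf : (∞ : OnePoint (ι × Y)) ∈ U) :
    ∀ᶠ i in cofinite, ∀ y, (((i, y) : ι × Y) : OnePoint (ι × Y)) ∈ U := by
  obtain ⟨hcpt, -⟩ := (isOpen_iff_of_mem' hinf).1 hU
  filter_upwards [(hcpt.image continuous_fst).finite_of_discrete.eventually_cofinite_notMem]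
    with i hi y
  by_contra hy
  exact hi ⟨(i, y), hy, rfl⟩

variable [MeasurableSpace (OnePoint (ι × Y))] [BorelSpace (OnePoint (ι × Y))]

theorem exists_isOpen_nonempty_measure_eq_zero [Uncountable ι] [Nonempty Y]
    (μ : Measure (OnePoint (ι × Y))) [IsFiniteMeasure μ] :
    ∃ U : Set (OnePoint (ι × Y)), IsOpen U ∧ U.Nonempty ∧ μ U = 0 := by
  let sheet (i : ι) : Set (OnePoint (ι × Y)) :=
    ((↑) : ι × Y → OnePoint (ι × Y)) '' ({i} ×ˢ univ)
  have hopen (i : ι) : IsOpen (sheet i) :=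
    isOpen_image_coe.2 ((isOpen_discrete _).prod isOpen_univ)
  have hdisj : Pairwise (Disjoint on sheet) := fun i j hij ↦
    (disjoint_image_iff coe_injective).2 (disjoint_prod.2 (.inl (disjoint_singleton.2 hij)))
  obtain ⟨i, hi⟩ :=
    exists_measure_eq_zero_of_pairwise_disjoint μ (fun i ↦ (hopen i).measurableSet) hdisj
  exact ⟨sheet i, hopen i, (singleton_nonempty i |>.prod univ_nonempty).image _, hi⟩

variable [MeasurableSpace Y] [BorelSpace Y] [PolishSpace Y] [LocallyCompactSpace Y]

theorem exists_isRadon_singleton_coe_null_mem_support (ν : Measure Y) [IsProbabilityMeasure ν]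
    [ν.IsOpenPosMeasure] [NullSingletonClass ν] (i : ι) (y : Y) :
    ∃ μ : Measure (OnePoint (ι × Y)), IsRadon μ ∧ μ {(((i, y) : ι × Y) : OnePoint (ι × Y))} = 0 ∧
      ∀ U, IsOpen U → (((i, y) : ι × Y) : OnePoint (ι × Y)) ∈ U → 0 < μ U := by
  let f (y' : Y) : OnePoint (ι × Y) := ↑(i, y')
  have hf : Continuous f := continuous_coe.comp (Continuous.prodMk_right i)
  have hinj : Injective f := fun _ _ h ↦ congrArg Prod.snd (coe_injective h)
  refine ⟨ν.map f, isRadon_map ν hf, ?_, fun U hU hyU ↦ map_pos_of_isOpen_of_mem ν hf hU hyU⟩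
  change ν.map f {f y} = 0
  rw [map_apply hf.measurable (measurableSet_singleton _), ← image_singleton,
    hinj.preimage_image, measure_singleton]

theorem exists_isRadon_singleton_infty_null_mem_support [Infinite ι] (ν : Measure Y)
    [IsProbabilityMeasure ν] {γ : Measure ℕ} [IsProbabilityMeasure γ] (hγ : ∀ n, γ {n} ≠ 0) :
    ∃ μ : Measure (OnePoint (ι × Y)), IsRadon μ ∧ μ {(∞ : OnePoint (ι × Y))} = 0 ∧
      ∀ U, IsOpen U → (∞ : OnePoint (ι × Y)) ∈ U → 0 < μ U := by
  let a := Infinite.natEmbedding ι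
  let f (p : ℕ × Y) : OnePoint (ι × Y) := ↑(a p.1, p.2)
  have hf : Continuous f :=
    continuous_coe.comp ((continuous_of_discreteTopology.comp continuous_fst).prodMk continuous_snd)
  refine ⟨(γ.prod ν).map f, isRadon_map _ hf, ?_, fun U hU hinf ↦ ?_⟩
  · have hpre : f ⁻¹' {(∞ : OnePoint (ι × Y))} = ∅ :=
      eq_empty_of_forall_notMem fun p ↦ coe_ne_infty _
    rw [map_apply hf.measurable (measurableSet_singleton _), hpre, measure_empty]
  · obtain ⟨n, hn⟩ := (a.injective.tendsto_cofinite.eventually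
      (eventually_cofinite_forall_coe_mem hU hinf)).exists
    have hsheet : {n} ×ˢ univ ⊆ f ⁻¹' U := by
      rintro ⟨m, y⟩ ⟨rfl, -⟩
      exact hn y
    rw [map_apply hf.measurable hU.measurableSet]
    refine (pos_iff_ne_zero.2 ?_).trans_le (measure_mono hsheet)
    rw [prod_prod, measure_univ, mul_one]
    exact hγ n

end OnePoint

/-- There is a compact Hausdorff space `K` supporting no strictly positive
Radon measure, in which nevertheless no point avoids measures: every `x ∈ K` lies in the
support of a Radon measure vanishing on `{x}`. -/
theorem exists_space_no_strictly_positive_measure_no_point_avoiding :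
    ∃ (K : Type) (tK : TopologicalSpace K) (mK : MeasurableSpace K),
      @BorelSpace K tK mK ∧ @CompactSpace K tK ∧ @T2Space K tK ∧
      (¬ ∃ μ : @Measure K mK, @IsRadon K tK mK μ ∧
        ∀ U : Set K, @IsOpen K tK U → U.Nonempty → 0 < μ U) ∧
      (∀ x : K, ∃ μ : @Measure K mK, @IsRadon K tK mK μ ∧ μ {x} = 0 ∧
        ∀ U : Set K, @IsOpen K tK U → x ∈ U → 0 < μ U) := by
  let ι := WithDiscreteTopology ℝ
  have : Uncountable ι := (WithTopology.equiv ℝ ⊥).uncountable_iff.2 inferInstance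
  let K := OnePoint (ι × unitInterval)
  let _ : MeasurableSpace K := borel K
  have : BorelSpace K := ⟨rfl⟩
  refine ⟨K, inferInstance, inferInstance, inferInstance, inferInstance, inferInstance, ?_, ?_⟩
  · rintro ⟨μ, ⟨hμ, -⟩, hpos⟩
    obtain ⟨U, hU, hne, hzero⟩ := exists_isOpen_nonempty_measure_eq_zero μ
    exact (hpos U hU hne).ne' hzero
  · intro x
    induction x using OnePoint.rec with
    | infty =>
      let p : unitInterval := ⟨2⁻¹, by norm_num, by norm_num⟩
      have hp0 : p ≠ 0 := unitInterval.coe_ne_zero.1 (by norm_num [p])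
      have hp1 : p ≠ 1 := unitInterval.coe_ne_one.1 (by norm_num [p])
      exact exists_isRadon_singleton_infty_null_mem_support volume
        (ProbabilityTheory.geometricMeasure_singleton_ne_zero hp0 hp1)
    | coe p => exact exists_isRadon_singleton_coe_null_mem_support volume p.1 p.2
end

section
/- If p is a P-point of a topological space X, then p avoids measures: for every Radon measure μ on X with μ({p}) = 0 there is an open set U ∋ p with μ(U) = 0. -/
open MeasureTheory Topology ENNReal NNReal

/-- A point `p` is a *P-point* if every countable intersection of open neighbourhoods of `p`
contains an open neighbourhood of `p`. -/
def IsPPoint {X : Type*} [TopologicalSpace X] (p : X) : Prop :=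
  ∀ U : ℕ → Set X, (∀ n, IsOpen (U n) ∧ p ∈ U n) →
    ∃ V : Set X, IsOpen V ∧ p ∈ V ∧ V ⊆ ⋂ n, U n

/-! Outer regularity gives open sets `U n ∋ p` with `μ (U n) ≤ μ {p} + n⁻¹`; at a P-point a single
open neighbourhood fits inside all of them, so its measure is at most `μ {p}`. -/

theorem IsPPoint.exists_isOpen_measure_le {X : Type*} [TopologicalSpace X] [MeasurableSpace X]
    {p : X} (hp : IsPPoint p) (μ : Measure X) [μ.OuterRegular] :
    ∃ V : Set X, IsOpen V ∧ p ∈ V ∧ μ V ≤ μ {p} := by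
  have hU (n : ℕ) : ∃ U ⊇ {p}, IsOpen U ∧ μ U ≤ μ {p} + (n : ℝ≥0∞)⁻¹ :=
    Set.exists_isOpen_le_add _ μ (ENNReal.inv_ne_zero.2 (natCast_ne_top n))
  choose U hpU hUo hμU using hU
  obtain ⟨V, hVo, hpV, hVU⟩ := hp U fun n => ⟨hUo n, hpU n rfl⟩
  refine ⟨V, hVo, hpV, ?_⟩
  have hlim : Filter.Tendsto (fun n : ℕ => μ {p} + (n : ℝ≥0∞)⁻¹) Filter.atTop (𝓝 (μ {p})) := by
    simpa using ENNReal.tendsto_inv_nat_nhds_zero.const_add (μ {p})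
  exact ge_of_tendsto' hlim fun n => (μ.mono (hVU.trans (Set.iInter_subset U n))).trans (hμU n)

theorem avoidsMeasures_of_isPPoint_general {X : Type*} [TopologicalSpace X] [MeasurableSpace X]
    (p : X) (hp : IsPPoint p) : AvoidsMeasures p := by
  rintro μ ⟨-, -, hμ⟩ hμp
  obtain ⟨V, hVo, hpV, hμV⟩ := hp.exists_isOpen_measure_le μ
  exact ⟨V, hVo, hpV, le_zero_iff.1 (hμp ▸ hμV)⟩

/-- If `p` is a P-point of a topological space `X`, then `p` avoids measures. -/
theorem avoidsMeasures_of_isPPoint {X : Type*} [TopologicalSpace X] [MeasurableSpace X]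
    [BorelSpace X] (p : X) (hp : IsPPoint p) : AvoidsMeasures p :=
  avoidsMeasures_of_isPPoint_general p hp
end

section
/- In any topological space X, a μ-point cannot be a limit point of a countable set of non-μ-points: if A = {a_n : n ∈ ω} ⊆ X and no a_n is a μ-point, then every point p ∈ closure(A) \ A fails to be a μ-point (there is a non-atomic Radon measure μ on X such that every open set containing p has positive μ-measure). -/
/-!
For each `a n` pick a non-atomic Radon measure `ν n` charging every neighbourhood of `a n`, and
put `μ = ∑ 2⁻¹ ^ (n + 1) • ν n`. Every open `U ∋ p` contains some `a n`, so `μ U > 0`, and `μ`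
is a non-atomic probability measure, inner regular because inner regularity passes to sums.
The one real point is outer regularity: up to a tail of arbitrarily small total mass, `μ` is a
finite sum of outer regular measures, and finite sums are outer regular.
-/

open MeasureTheory Topology ENNReal NNReal

namespace MeasureTheory.Measure.OuterRegular

variable {X : Type*} [TopologicalSpace X] [MeasurableSpace X]

instance add (μ ν : Measure X) [OuterRegular μ] [OuterRegular ν] : OuterRegular (μ + ν) := by
  refine ⟨fun A _ r hr => ?_⟩
  rw [gt_iff_lt, Measure.add_apply, ← lt_tsub_iff_right] at hr
  obtain ⟨U, hAU, hUo, hμU⟩ := A.exists_isOpen_lt_of_lt _ hr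
  rw [lt_tsub_iff_right, add_comm, ← lt_tsub_iff_right] at hμU
  obtain ⟨V, hAV, hVo, hνV⟩ := A.exists_isOpen_lt_of_lt _ hμU
  refine ⟨U ∩ V, Set.subset_inter hAU hAV, hUo.inter hVo, ?_⟩
  calc (μ + ν) (U ∩ V) ≤ μ U + ν V := by
        rw [Measure.add_apply]
        gcongr
        exacts [Set.inter_subset_left, Set.inter_subset_right]
    _ < r := by rwa [add_comm, ← lt_tsub_iff_right]

instance finsetSum {ι : Type*} (μ : ι → Measure X) [∀ i, OuterRegular (μ i)] (s : Finset ι) :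
    OuterRegular (∑ i ∈ s, μ i) := by
  classical
  induction s using Finset.induction with
  | empty => simp only [Finset.sum_empty]; infer_instance
  | insert a s ha ih => simp only [ha, not_false_eq_true, Finset.sum_insert]; infer_instance

theorem sum {ι : Type*} {μ : ι → Measure X} [∀ i, OuterRegular (μ i)]
    (h : ∑' i, μ i Set.univ ≠ ∞) : OuterRegular (Measure.sum μ) := by
  refine ⟨fun A _ r hr => ?_⟩
  obtain ⟨s, hs⟩ : ∃ s : Finset ι, ∑' i : {i // i ∉ s}, μ i Set.univ < r - Measure.sum μ A :=
    ((ENNReal.tendsto_tsum_compl_atTop_zero h).eventually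
      (gt_mem_nhds (tsub_pos_of_lt hr))).exists
  set τ := Measure.sum fun i : ↥(s : Set ι)ᶜ => μ i
  have hsplit : ∑ i ∈ s, μ i + τ = Measure.sum μ := by
    rw [← Measure.sum_coe_finset]
    exact Measure.sum_add_sum_compl (s : Set ι) μ
  have hτ : τ Set.univ = ∑' i : {i // i ∉ s}, μ i Set.univ :=
    Measure.sum_apply _ MeasurableSet.univ
  rw [← hτ, lt_tsub_iff_right] at hs
  have hνA : (∑ i ∈ s, μ i) A < r - τ Set.univ := by
    rw [lt_tsub_iff_right]
    calc (∑ i ∈ s, μ i) A + τ Set.univ ≤ Measure.sum μ A + τ Set.univ := by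
          gcongr
          rw [← hsplit]
          exact Measure.le_add_right le_rfl
      _ < r := by rwa [add_comm]
  obtain ⟨U, hAU, hUo, hνU⟩ := A.exists_isOpen_lt_of_lt _ hνA
  refine ⟨U, hAU, hUo, ?_⟩
  calc Measure.sum μ U = (∑ i ∈ s, μ i) U + τ U := by rw [← hsplit, Measure.add_apply]
    _ ≤ (∑ i ∈ s, μ i) U + τ Set.univ := by gcongr; exact Set.subset_univ U
    _ < r := lt_tsub_iff_right.mp hνU

end MeasureTheory.Measure.OuterRegular

theorem ENNReal.tsum_inv_two_pow_succ : ∑' n : ℕ, (2⁻¹ : ℝ≥0∞) ^ (n + 1) = 1 := by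
  rw [ENNReal.tsum_geometric_add_one, ENNReal.one_sub_inv_two, inv_inv,
    ENNReal.inv_mul_cancel two_ne_zero ofNat_ne_top]

section Radon

variable {X : Type*} [TopologicalSpace X] [MeasurableSpace X]

theorem IsRadon.sum_smul {ι : Type*} {ν : ι → Measure X} (hν : ∀ i, IsRadon (ν i))
    {c : ι → ℝ≥0∞} (hc : ∑' i, c i = 1) : IsRadon (Measure.sum fun i => c i • ν i) := by
  have hprob : ∀ i, IsProbabilityMeasure (ν i) := fun i => (hν i).1
  have hinner : ∀ i, (c i • ν i).InnerRegular := fun i => ⟨(hν i).2.1.smul (c i)⟩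
  have houter : ∀ i, (c i • ν i).OuterRegular := fun i =>
    have := (hν i).2.2
    Measure.OuterRegular.smul _ (ne_top_of_le_ne_top one_ne_top (hc ▸ ENNReal.le_tsum i))
  have hmass : ∑' i, (c i • ν i) Set.univ = 1 := by simp [hc]
  refine ⟨⟨?_⟩, Measure.InnerRegular.innerRegular, Measure.OuterRegular.sum (hmass ▸ one_ne_top)⟩
  rwa [Measure.sum_apply _ MeasurableSet.univ]

theorem not_isMuPoint_iff {x : X} : ¬ IsMuPoint x ↔ ∃ μ : Measure X, IsRadon μ ∧
    (∀ y : X, μ {y} = 0) ∧ ∀ U : Set X, IsOpen U → x ∈ U → 0 < μ U := by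
  simp only [IsMuPoint, pos_iff_ne_zero]
  push Not
  rfl

end Radon

theorem muPoint_not_limit_of_non_muPoints_general {X : Type*} [TopologicalSpace X] [MeasurableSpace X]
    (a : ℕ → X) (ha : ∀ n, ¬ IsMuPoint (a n))
    (p : X) (hp : p ∈ closure (Set.range a)) :
    ∃ μ : Measure X, IsRadon μ ∧ (∀ y : X, μ {y} = 0) ∧
      ∀ U : Set X, IsOpen U → p ∈ U → 0 < μ U := by
  choose ν hν hν_atom hν_pos using fun n => not_isMuPoint_iff.mp (ha n)
  set c : ℕ → ℝ≥0∞ := fun n => 2⁻¹ ^ (n + 1)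
  refine ⟨Measure.sum fun n => c n • ν n, IsRadon.sum_smul hν ENNReal.tsum_inv_two_pow_succ,
    fun y => Measure.sum_apply_eq_zero.mpr fun n => by simp [hν_atom], fun U hU hpU => ?_⟩
  obtain ⟨_, hxU, n, rfl⟩ := mem_closure_iff.mp hp U hU hpU
  calc 0 < c n * ν n U := ENNReal.mul_pos (by simp [c]) (hν_pos n U hU hxU).ne'
    _ ≤ Measure.sum (fun n => c n • ν n) U := Measure.le_iff'.mp (Measure.le_sum _ n) U

/-- In a topological space `X`, a μ-point cannot be a limit point of a
countable set of non-μ-points: if `A = {a n : n ∈ ω}` consists of non-μ-points, then every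
`p ∈ closure A \ A` fails to be a μ-point, as witnessed by a non-atomic Radon measure all of
whose open neighbourhoods of `p` have positive measure. -/
theorem muPoint_not_limit_of_non_muPoints {X : Type*} [TopologicalSpace X] [MeasurableSpace X]
    [BorelSpace X] (a : ℕ → X) (ha : ∀ n, ¬ IsMuPoint (a n))
    (p : X) (hp : p ∈ closure (Set.range a)) (hpA : p ∉ Set.range a) :
    ∃ μ : Measure X, IsRadon μ ∧ (∀ y : X, μ {y} = 0) ∧
      ∀ U : Set X, IsOpen U → p ∈ U → 0 < μ U :=
  muPoint_not_limit_of_non_muPoints_general a ha p hp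
end

section
/- If a compact Hausdorff space K contains a μ-point, then K contains a point which is simultaneously a μ-point and a weak P-point, or K contains a countable dense-in-itself subset all of whose points are μ-points. -/
open MeasureTheory Topology ENNReal NNReal

/-! A countable set `C` of non-μ-points cannot accumulate at a μ-point `y`: pick for each `c ∈ C`
a nonatomic Radon measure charging every neighbourhood of `c`; a geometric average of these is a
nonatomic Radon measure charging every neighbourhood of `y`. Hence if no μ-point is a weak P-point,
every μ-point is a limit of countably many other μ-points, and saturating `{x}` countably often
under this choice gives a countable dense-in-itself set of μ-points. -/

section

variable {X : Type*} [TopologicalSpace X] [MeasurableSpace X] [BorelSpace X] [R1Space X]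

/-- Outer regularity is automatic: a finite inner regular measure on an R₁ space is regular. -/
theorem isRadon_of_innerRegular (μ : Measure X) [IsProbabilityMeasure μ] [μ.InnerRegular] :
    IsRadon μ :=
  ⟨‹_›, Measure.InnerRegular.innerRegular, inferInstance⟩

theorem IsRadon.sum_geometric {μ : ℕ → Measure X} (hμ : ∀ n, IsRadon (μ n)) :
    IsRadon (Measure.sum fun n => (2⁻¹ : ℝ≥0∞) ^ (n + 1) • μ n) := by
  have hprob : ∀ n, IsProbabilityMeasure (μ n) := fun n => (hμ n).1
  have : ∀ n, (μ n).InnerRegular := fun n => ⟨(hμ n).2.1⟩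
  have : IsProbabilityMeasure (Measure.sum fun n => (2⁻¹ : ℝ≥0∞) ^ (n + 1) • μ n) := by
    constructor
    simp only [Measure.sum_apply _ MeasurableSet.univ, Measure.smul_apply, measure_univ,
      smul_eq_mul, mul_one, ENNReal.tsum_geometric_add_one, ENNReal.one_sub_inv_two, inv_inv]
    exact ENNReal.inv_mul_cancel two_ne_zero ofNat_ne_top
  exact isRadon_of_innerRegular _

theorem IsMuPoint.notMem_closure {y : X} (hy : IsMuPoint y) {C : Set X} (hC : C.Countable)
    (hCn : ∀ c ∈ C, ¬ IsMuPoint c) : y ∉ closure C := by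
  rcases C.eq_empty_or_nonempty with rfl | hne
  · simp
  obtain ⟨c, rfl⟩ := hC.exists_eq_range hne
  have hwitness : ∀ n, ∃ μ : Measure X, IsRadon μ ∧ (∀ z, μ {z} = 0) ∧
      ∀ U, IsOpen U → c n ∈ U → μ U ≠ 0 := by
    simpa [IsMuPoint] using hCn
  choose μ hμ hμatom hμpos using hwitness
  obtain ⟨U, hU, hyU, hνU⟩ := hy _ (IsRadon.sum_geometric hμ) fun z => by
    simp [Measure.sum_apply_eq_zero, hμatom]
  intro hycl
  obtain ⟨_, hcU, n, rfl⟩ := mem_closure_iff.1 hycl U hU hyU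
  have hμU : (2⁻¹ : ℝ≥0∞) ^ (n + 1) * μ n U = 0 := Measure.sum_apply_eq_zero.1 hνU n
  exact hμpos n U hU hcU (by simpa using hμU)

theorem IsMuPoint.exists_countable_muPoints_of_not_isWeakPPoint {y : X} (hy : IsMuPoint y)
    (hw : ¬ IsWeakPPoint y) :
    ∃ D ⊆ {d | IsMuPoint d}, D.Countable ∧ y ∉ D ∧ y ∈ closure D := by
  simp only [IsWeakPPoint, not_forall, not_not] at hw
  obtain ⟨C, hC, hyC, hyCl⟩ := hw
  refine ⟨C ∩ {c | IsMuPoint c}, Set.inter_subset_right, hC.mono Set.inter_subset_left,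
    fun h => hyC h.1, ?_⟩
  rw [← Set.inter_union_compl C {c | IsMuPoint c}, closure_union] at hyCl
  exact hyCl.resolve_right <| hy.notMem_closure (hC.mono Set.inter_subset_left) fun c hc => hc.2

end

theorem exists_countable_subset_forall_mem_closure_diff_singleton {X : Type*}
    [TopologicalSpace X] {S : Set X} (hS : ∀ y ∈ S, ∃ D ⊆ S, D.Countable ∧ y ∉ D ∧ y ∈ closure D)
    {x : X} (hx : x ∈ S) :
    ∃ A ⊆ S, x ∈ A ∧ A.Countable ∧ ∀ a ∈ A, a ∈ closure (A \ {a}) := by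
  choose! D hDS hDc hyD hyDcl using hS
  set step : Set X → Set X := fun s => s ∪ ⋃ a ∈ s, D a
  have hstep : ∀ s ⊆ S, s.Countable → step s ⊆ S ∧ (step s).Countable := fun s hsS hs =>
    ⟨Set.union_subset hsS (Set.iUnion₂_subset fun a ha => hDS a (hsS ha)),
      hs.union (hs.biUnion fun a ha => hDc a (hsS ha))⟩
  have hiter : ∀ n, step^[n] {x} ⊆ S ∧ (step^[n] {x}).Countable := by
    intro n
    induction n with
    | zero => exact ⟨Set.singleton_subset_iff.2 hx, Set.countable_singleton x⟩
    | succ n ih => rw [Function.iterate_succ_apply']; exact hstep _ ih.1 ih.2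
  refine ⟨⋃ n, step^[n] {x}, Set.iUnion_subset fun n => (hiter n).1, Set.mem_iUnion.2 ⟨0, rfl⟩,
    Set.countable_iUnion fun n => (hiter n).2, fun a ha => ?_⟩
  obtain ⟨n, han⟩ := Set.mem_iUnion.1 ha
  have haS := (hiter n).1 han
  refine closure_mono (fun d hd => Set.mem_sdiff_singleton.2 ⟨Set.mem_iUnion.2 ⟨n + 1, ?_⟩, ?_⟩)
    (hyDcl a haS)
  · rw [Function.iterate_succ_apply']
    exact Or.inr (Set.mem_biUnion han hd)
  · rintro rfl
    exact hyD d haS hd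

theorem muPoint_dichotomy_general {K : Type*} [TopologicalSpace K] [T2Space K]
    [MeasurableSpace K] [BorelSpace K] (x : K) (hx : IsMuPoint x) :
    (∃ y : K, IsMuPoint y ∧ IsWeakPPoint y) ∨
      ∃ A : Set K, A.Nonempty ∧ A.Countable ∧ (∀ a ∈ A, a ∈ closure (A \ {a})) ∧
        ∀ a ∈ A, IsMuPoint a := by
  by_cases hweak : ∃ y : K, IsMuPoint y ∧ IsWeakPPoint y
  · exact Or.inl hweak
  push Not at hweak
  obtain ⟨A, hAmu, hxA, hAc, hA⟩ := exists_countable_subset_forall_mem_closure_diff_singleton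
    (fun y hy => IsMuPoint.exists_countable_muPoints_of_not_isWeakPPoint hy (hweak y hy)) hx
  exact Or.inr ⟨A, ⟨x, hxA⟩, hAc, hA, hAmu⟩

/-- If a compact Hausdorff space `K` contains a μ-point, then it contains a
point which is simultaneously a μ-point and a weak P-point, or a nonempty countable
dense-in-itself subset consisting of μ-points. -/
theorem muPoint_dichotomy {K : Type*} [TopologicalSpace K] [CompactSpace K] [T2Space K]
    [MeasurableSpace K] [BorelSpace K] (x : K) (hx : IsMuPoint x) :
    (∃ y : K, IsMuPoint y ∧ IsWeakPPoint y) ∨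
      ∃ A : Set K, A.Nonempty ∧ A.Countable ∧ (∀ a ∈ A, a ∈ closure (A \ {a})) ∧
        ∀ a ∈ A, IsMuPoint a :=
  muPoint_dichotomy_general x hx
end

section
/- There exists a 𝔠-OK point in ω*, where 𝔠 is the cardinality of the continuum. -/
open MeasureTheory Topology ENNReal NNReal

/-- The space `ω* = βω \ ω`: the free (non-principal) ultrafilters on `ℕ`, with the topology
inherited from the Stone space `βω` of all ultrafilters on `ℕ`. -/
def OmegaStar : Type := {u : Ultrafilter ℕ // ∀ n : ℕ, u ≠ pure n}

instance : TopologicalSpace OmegaStar := instTopologicalSpaceSubtype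
instance : MeasurableSpace OmegaStar := borel OmegaStar
instance : BorelSpace OmegaStar := ⟨rfl⟩

/-- A point `p` is a *κ-OK point* if for every sequence `(U n)` of open neighbourhoods of `p`
there is a family of κ many open neighbourhoods `(V i)` of `p` such that for every `n ≥ 1`,
the intersection of any `n` pairwise distinct members `V i` is contained in `U n`. -/
def IsOKPoint {X : Type*} [TopologicalSpace X] (κ : Cardinal) (p : X) : Prop :=
  ∀ U : ℕ → Set X, (∀ n, IsOpen (U n) ∧ p ∈ U n) →
    ∃ (ι : Type) (_ : Cardinal.mk ι = κ) (V : ι → Set X),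
      (∀ i, IsOpen (V i) ∧ p ∈ V i) ∧
      ∀ n : ℕ, 1 ≤ n → ∀ s : Finset ι, s.card = n → (⋂ i ∈ s, V i) ⊆ U n

/-!
Kunen's construction. An independent linked family `A^ρ_{x,m}` (rows `ρ` and columns `x` in
`𝒫(ω)`, levels `m ∈ ω`) is built from finite patterns on traces: `n` distinct columns of one
row meet finitely at every level `m < n`, while a finite selection in which every level is at
least the number of columns chosen from its row has infinite intersection.

In `𝔠` stages, one for each sequence `σ` of subsets of `ω`, a filter is grown which stays
compatible with the family restricted to the rows not yet used. At the stage of `σ`, either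
some `σ n` can be excluded at the cost of finitely many rows, or a fresh row `ρ` is spent to add
all the sets `B_x = ⋃ₘ (A^ρ_{x,m} ∩ σ m)`; fewer than `𝔠` rows are spent before any stage, so a
fresh row exists. If `p` is an ultrafilter extending all these filters and `σ` is a decreasing
sequence in `p`, no `σ n` was excluded, so all `B_x` lie in `p`, and `n` distinct `B_x` meet
inside `σ n` up to the finite set `⋃_{m<n} ⋂ₓ A^ρ_{x,m}`: the clopen sets `B_x*` witness that
`p` is a `𝔠`-OK point.
-/

namespace KunenOK

open Set Filter Finset

noncomputable section

open Classical in
def trace (x : Set ℕ) (k : ℕ) : Finset (Fin k) := {i | (i : ℕ) ∈ x}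

theorem eventually_injOn_trace (S : Finset (Set ℕ)) :
    ∀ᶠ k in atTop, Set.InjOn (trace · k) S := by
  have hpair : ∀ q : Set ℕ × Set ℕ, ∀ᶠ k in atTop, trace q.1 k = trace q.2 k → q.1 = q.2 := by
    rintro ⟨x, y⟩
    by_cases hxy : x = y
    · exact Eventually.of_forall fun _ _ => hxy
    obtain ⟨a, ha⟩ : ∃ a, ¬(a ∈ x ↔ a ∈ y) := by
      by_contra! h
      exact hxy (Set.ext h)
    filter_upwards [eventually_gt_atTop a] with k hk heq
    exact (ha (by simpa [trace] using Finset.ext_iff.1 heq ⟨a, hk⟩)).elim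
  filter_upwards [(eventually_all_finset (S ×ˢ S)).2 fun q _ => hpair q]
    with k hk x hx y hy hxy
  exact hk (x, y) (Finset.mk_mem_product hx hy) hxy

/-- A pattern `⟨k, Φ⟩` lists, for each possible trace on `k` of a row, the admissible traces
of the columns. -/
abbrev Pattern : Type := Σ k : ℕ, Finset (Fin k) → Finset (Finset (Fin k))

instance : Infinite Pattern :=
  Infinite.of_injective (fun k => (⟨k, fun _ => ∅⟩ : Pattern)) fun _ _ h => congrArg Sigma.fst h

def patternEquiv : ℕ ≃ Pattern := Classical.choice inferInstance

theorem finite_setOf_patternEquiv_fst_lt (K : ℕ) : {d | (patternEquiv d).1 < K}.Finite := by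
  refine Set.Finite.preimage patternEquiv.injective.injOn ((Set.finite_Iio K).preimage' ?_)
  intro k _
  refine (Set.finite_range (Sigma.mk k)).subset ?_
  rintro ⟨j, Φ⟩ rfl
  exact Set.mem_range_self Φ

def Pattern.row (P : Pattern) (ρ : Set ℕ) : Finset (Finset (Fin P.1)) := P.2 (trace ρ P.1)

/-- Kunen's `A^ρ_{x,m}`: row `ρ`, column `x`, level `m`. -/
def linkedSet (ρ x : Set ℕ) (m : ℕ) : Set ℕ :=
  {d | trace x (patternEquiv d).1 ∈ (patternEquiv d).row ρ ∧ #((patternEquiv d).row ρ) ≤ m}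

theorem linkedSet_mono (ρ x : Set ℕ) : Monotone (linkedSet ρ x) :=
  fun _ _ h _ hd => ⟨hd.1, hd.2.trans h⟩

theorem finite_biInter_linkedSet {ρ : Set ℕ} {s : Finset (Set ℕ)} {m : ℕ} (hm : m < #s) :
    (⋂ x ∈ s, linkedSet ρ x m).Finite := by
  obtain ⟨K, hK⟩ := eventually_atTop.1 (eventually_injOn_trace s)
  refine (finite_setOf_patternEquiv_fst_lt K).subset fun d hd => ?_
  by_contra hKd
  replace hKd : K ≤ (patternEquiv d).1 := not_lt.1 hKd
  simp only [Set.mem_iInter] at hd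
  set P := patternEquiv d
  obtain ⟨x₀, hx₀⟩ := Finset.card_pos.1 (m.zero_le.trans_lt hm)
  have : #s ≤ m := calc
    #s = #(s.image (trace · P.1)) := (card_image_of_injOn (hK _ hKd)).symm
    _ ≤ #(P.row ρ) := card_le_card (image_subset_iff.2 fun x hx => (hd x hx).1)
    _ ≤ m := (hd x₀ hx₀).2
  omega

open Classical in
/-- Each selected member is taken at the least level allowed, the number of columns selected
from its row. -/
def selection (T : Finset (Set ℕ × Set ℕ)) : Set ℕ :=
  ⋂ q ∈ T, linkedSet q.1 q.2 #{r ∈ T | r.1 = q.1}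

def selectionPattern (T : Finset (Set ℕ × Set ℕ)) (k : ℕ) : Pattern :=
  ⟨k, fun t => {q ∈ T | trace q.1 k = t}.image (trace ·.2 k)⟩

theorem patternEquiv_symm_selectionPattern_mem {T : Finset (Set ℕ × Set ℕ)} {k : ℕ}
    (hk : Set.InjOn (trace · k) (T.image Prod.fst)) :
    patternEquiv.symm (selectionPattern T k) ∈ selection T := by
  simp only [selection, Set.mem_iInter]
  intro q hq
  rw [linkedSet, Set.mem_ofPred_eq, Equiv.apply_symm_apply]
  have hmem : trace q.2 k ∈ {r ∈ T | trace r.1 k = trace q.1 k}.image (trace ·.2 k) :=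
    Finset.mem_image_of_mem _ (mem_filter.2 ⟨hq, rfl⟩)
  have hcard : #{r ∈ T | trace r.1 k = trace q.1 k} = #{r ∈ T | r.1 = q.1} := by
    congr 1
    exact filter_congr fun r hr => ⟨fun h => hk (Finset.mem_image_of_mem _ hr)
      (Finset.mem_image_of_mem _ hq) h, fun h => congrArg (trace · k) h⟩
  exact ⟨hmem, card_image_le.trans_eq hcard⟩

theorem infinite_selection (T : Finset (Set ℕ × Set ℕ)) : (selection T).Infinite := by
  obtain ⟨K, hK⟩ := eventually_atTop.1 (eventually_injOn_trace (T.image Prod.fst))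
  refine Set.infinite_of_injective_forall_mem (f := fun n => patternEquiv.symm
    (selectionPattern T (K + n))) (fun a b h => ?_) fun n => ?_
  · simpa [selectionPattern] using congrArg Sigma.fst (patternEquiv.symm.injective h)
  · exact patternEquiv_symm_selectionPattern_mem (hK _ (Nat.le_add_right K n))

theorem selection_union {T₁ T₂ : Finset (Set ℕ × Set ℕ)}
    (h : Disjoint (T₁.image Prod.fst) (T₂.image Prod.fst)) :
    selection (T₁ ∪ T₂) = selection T₁ ∩ selection T₂ := by
  have hrow : ∀ {T T' : Finset (Set ℕ × Set ℕ)},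
      Disjoint (T.image Prod.fst) (T'.image Prod.fst) →
      ∀ q ∈ T, {r ∈ T ∪ T' | r.1 = q.1} = {r ∈ T | r.1 = q.1} := by
    intro T T' h q hq
    rw [filter_union, filter_false_of_mem fun r hr (hrq : r.1 = q.1) => disjoint_left.1 h
      (Finset.mem_image_of_mem _ hq) (hrq ▸ Finset.mem_image_of_mem Prod.fst hr),
      Finset.union_empty]
  ext a
  simp only [selection, Set.mem_iInter, Set.mem_inter_iff, Finset.mem_union, or_imp, forall_and]
  refine and_congr (forall₂_congr fun q hq => by rw [hrow h q hq])
    (forall₂_congr fun q hq => ?_)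
  rw [Finset.union_comm, hrow h.symm q hq]

/-- Kunen's invariant; the rows in `L` are those still free to be used by later stages. -/
def Compatible (F : Filter ℕ) (L : Set (Set ℕ)) : Prop :=
  ∀ s ∈ F, ∀ T : Finset (Set ℕ × Set ℕ), (∀ q ∈ T, q.1 ∈ L) → (s ∩ selection T).Infinite

theorem Compatible.mono {F F' : Filter ℕ} {L L' : Set (Set ℕ)} (h : Compatible F L)
    (hF : F ≤ F') (hL : L' ⊆ L) : Compatible F' L' :=
  fun s hs T hT => h s (hF hs) T fun q hq => hL (hT q hq)

theorem compatible_cofinite : Compatible cofinite univ := fun _ hs T _ =>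
  ((infinite_selection T).sdiff (mem_cofinite.1 hs)).mono fun _ ha =>
    ⟨not_not.1 ha.2, ha.1⟩

theorem Compatible.neBot {F : Filter ℕ} {L : Set (Set ℕ)} (h : Compatible F L) : F.NeBot :=
  ⟨fun hF => (h ∅ (hF ▸ mem_bot) ∅ fun _ hq => absurd hq (Finset.notMem_empty _)).nonempty.ne_empty
    (Set.empty_inter _)⟩

theorem compatible_iInf {ι : Type*} [Nonempty ι] {F : ι → Filter ℕ} {L : ι → Set (Set ℕ)}
    (hF : Directed (· ≥ ·) F) (h : ∀ i, Compatible (F i) (L i)) :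
    Compatible (⨅ i, F i) (⋂ i, L i) := fun s hs T hT => by
  obtain ⟨i, hi⟩ := (mem_iInf_of_directed hF s).1 hs
  exact h i s hi T fun q hq => Set.mem_iInter.1 (hT q hq) i

/-- If some member `s ∩ D` of `F ⊓ 𝓟 D` meets a selection `T` only finitely, then `Dᶜ` can be
added to `F` at the price of the finitely many rows used by `T`. -/
theorem Compatible.inf_principal_compl {F : Filter ℕ} {L : Set (Set ℕ)} {D : Set ℕ}
    (h : Compatible F L) (hD : ¬ Compatible (F ⊓ 𝓟 D) L) :
    ∃ K : Set (Set ℕ), K.Finite ∧ Compatible (F ⊓ 𝓟 Dᶜ) (L \ K) := by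
  simp only [Compatible, not_forall, Set.not_infinite] at hD
  obtain ⟨s, hs, T, hT, hfin⟩ := hD
  refine ⟨T.image Prod.fst, Finset.finite_toSet _, fun s' hs' T' hT' => ?_⟩
  have hdisj : Disjoint (T.image Prod.fst) (T'.image Prod.fst) := by
    refine Finset.disjoint_left.2 fun ρ hρ hρ' => ?_
    obtain ⟨q, hq, rfl⟩ := Finset.mem_image.1 hρ'
    exact (hT' q hq).2 (Finset.mem_coe.2 hρ)
  have hinf := h _ (inter_mem (mem_inf_principal.1 hs) (mem_inf_principal.1 hs')) (T ∪ T')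
    fun q hq => (Finset.mem_union.1 hq).elim (hT q) fun hq => (hT' q hq).1
  rw [selection_union hdisj] at hinf
  refine (hinf.sdiff hfin).mono ?_
  rintro a ⟨⟨⟨has, has'⟩, haT, haT'⟩, hna⟩
  exact ⟨has' fun haD => hna ⟨has haD, haT⟩, haT'⟩

def diagonalSet (ρ : Set ℕ) (σ : ℕ → Set ℕ) (x : Set ℕ) : Set ℕ := ⋃ m, linkedSet ρ x m ∩ σ m

theorem finite_biInter_diagonalSet_diff {σ : ℕ → Set ℕ} (hσ : Antitone σ) (ρ : Set ℕ)
    {s : Finset (Set ℕ)} (hs : s.Nonempty) :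
    ((⋂ x ∈ s, diagonalSet ρ σ x) \ σ #s).Finite := by
  refine ((Set.finite_lt_nat #s).biUnion fun m hm =>
    finite_biInter_linkedSet (ρ := ρ) hm).subset ?_
  rintro a ⟨ha, hna⟩
  have hlevel : ∀ x ∈ s, ∃ m, a ∈ linkedSet ρ x m ∩ σ m := fun x hx =>
    Set.mem_iUnion.1 (Set.mem_iInter₂.1 ha x hx)
  choose! m hm using hlevel
  have hlt : s.sup m < #s := (Finset.sup_lt_iff (Finset.card_pos.2 hs)).2 fun x hx =>
    not_le.1 fun hle => hna (hσ hle (hm x hx).2)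
  exact Set.mem_biUnion hlt (Set.mem_iInter₂.2 fun x hx =>
    linkedSet_mono ρ x (Finset.le_sup hx) (hm x hx).1)

theorem compatible_inf_iInf_principal_diagonalSet {F : Filter ℕ} {L : Set (Set ℕ)} {ρ : Set ℕ}
    {σ : ℕ → Set ℕ} (hρ : ρ ∈ L) (hσ : ∀ n, Compatible (F ⊓ 𝓟 (σ n)) L) :
    Compatible (F ⊓ ⨅ x, 𝓟 (diagonalSet ρ σ x)) (L \ {ρ}) := by
  intro s hs T hT
  obtain ⟨s₁, hs₁, s₂, hs₂, rfl⟩ := mem_inf_iff.1 hs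
  obtain ⟨xs, hxs⟩ := (mem_iInf_finite _).1 hs₂
  rw [iInf_principal_finset, mem_principal] at hxs
  set T' := xs.image (ρ, ·)
  have hdisj : Disjoint (T.image Prod.fst) (T'.image Prod.fst) := by
    refine Finset.disjoint_left.2 fun ρ' hρ' hρ'' => ?_
    obtain ⟨q, hq, rfl⟩ := Finset.mem_image.1 hρ'
    obtain ⟨q', hq', hqq'⟩ := Finset.mem_image.1 hρ''
    obtain ⟨x, -, rfl⟩ := Finset.mem_image.1 hq'
    exact (hT q hq).2 hqq'.symm
  have hinf := hσ #xs _ (inter_mem_inf hs₁ (mem_principal_self _)) (T ∪ T') fun q hq =>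
    (Finset.mem_union.1 hq).elim (fun hq => (hT q hq).1) fun hq => by
      obtain ⟨x, -, rfl⟩ := Finset.mem_image.1 hq
      exact hρ
  rw [selection_union hdisj] at hinf
  refine hinf.mono ?_
  rintro a ⟨⟨has, haσ⟩, haT, haT'⟩
  refine ⟨⟨has, hxs (Set.mem_iInter₂.2 fun x hx => ?_)⟩, haT⟩
  refine Set.mem_iUnion.2 ⟨#xs, ?_, haσ⟩
  have hrow : #{r ∈ T' | r.1 = ρ} = #xs := by
    rw [Finset.filter_true_of_mem fun r hr => by obtain ⟨y, -, rfl⟩ := Finset.mem_image.1 hr; rfl]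
    exact Finset.card_image_of_injective _ (Prod.mk_right_injective ρ)
  have := Set.mem_iInter₂.1 haT' (ρ, x) (Finset.mem_image_of_mem _ hx)
  rwa [hrow] at this

def Decides (σ : ℕ → Set ℕ) (E : Filter ℕ) : Prop :=
  (∃ n, (σ n)ᶜ ∈ E) ∨ ∃ ρ, ∀ x, diagonalSet ρ σ x ∈ E

theorem Compatible.exists_decides {F : Filter ℕ} {L : Set (Set ℕ)} (h : Compatible F L)
    (hL : L.Nonempty) (σ : ℕ → Set ℕ) :
    ∃ E : Filter ℕ × Set (Set ℕ),
      E.2.Finite ∧ Compatible (F ⊓ E.1) (L \ E.2) ∧ Decides σ E.1 := by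
  by_cases hσ : ∀ n, Compatible (F ⊓ 𝓟 (σ n)) L
  · obtain ⟨ρ, hρ⟩ := hL
    exact ⟨(⨅ x, 𝓟 (diagonalSet ρ σ x), {ρ}), Set.finite_singleton ρ,
      compatible_inf_iInf_principal_diagonalSet hρ hσ,
      Or.inr ⟨ρ, fun x => mem_iInf_of_mem x (mem_principal_self _)⟩⟩
  · obtain ⟨n, hn⟩ := not_forall.1 hσ
    obtain ⟨K, hK, hcompat⟩ := h.inf_principal_compl hn
    exact ⟨(𝓟 (σ n)ᶜ, K), hK, hcompat, Or.inl ⟨n, mem_principal_self _⟩⟩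

/-- The stages of the construction, well-ordered in type `𝔠`, so that fewer than `𝔠` stages
precede each one. -/
abbrev Stage : Type := Cardinal.continuum.ord.ToType

theorem mk_Iio_stage_lt (i : Stage) : Cardinal.mk (Iio i) < Cardinal.continuum := by
  simpa using Cardinal.mk_Iio_lt i (by simp)

def stageSeq : Stage ≃ (ℕ → Set ℕ) :=
  Classical.choice (Cardinal.eq.1 (by simp))

open Classical in
/-- The filter added at a stage and the rows it uses up. -/
def step (σ : ℕ → Set ℕ) (F : Filter ℕ) (L : Set (Set ℕ)) : Filter ℕ × Set (Set ℕ) :=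
  if h : Compatible F L ∧ L.Nonempty then (h.1.exists_decides h.2 σ).choose else (⊤, ∅)

def stage : Stage → Filter ℕ × Set (Set ℕ) :=
  wellFounded_lt.fix fun i rec => step (stageSeq i)
    (cofinite ⊓ ⨅ (j) (h : j < i), (rec j h).1) {ρ | ∀ j (h : j < i), ρ ∉ (rec j h).2}

def filterBefore (i : Stage) : Filter ℕ := cofinite ⊓ ⨅ (j) (_ : j < i), (stage j).1

def liveBefore (i : Stage) : Set (Set ℕ) := {ρ | ∀ j < i, ρ ∉ (stage j).2}

def filterAfter (i : Stage) : Filter ℕ := filterBefore i ⊓ (stage i).1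

def liveAfter (i : Stage) : Set (Set ℕ) := liveBefore i \ (stage i).2

theorem stage_eq (i : Stage) : stage i = step (stageSeq i) (filterBefore i) (liveBefore i) :=
  wellFounded_lt.fix_eq _ i

theorem finite_stage_snd (i : Stage) : (stage i).2.Finite := by
  rw [stage_eq, step]
  split_ifs with h
  · exact (h.1.exists_decides h.2 _).choose_spec.1
  · exact Set.finite_empty

theorem liveBefore_nonempty (i : Stage) : (liveBefore i).Nonempty := by
  have hlt : Cardinal.mk (⋃ j : Iio i, (stage j).2) < Cardinal.continuum := by
    refine (Cardinal.mk_iUnion_le _).trans_lt (Cardinal.mul_lt_of_lt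
      Cardinal.aleph0_le_continuum (mk_Iio_stage_lt i) ?_)
    exact (ciSup_le' fun j : Iio i => (finite_stage_snd j).lt_aleph0.le).trans_lt
      Cardinal.aleph0_lt_continuum
  have hcompl : liveBefore i = (⋃ j : Iio i, (stage j).2)ᶜ := by
    ext ρ
    simp [liveBefore]
  rw [hcompl, Set.nonempty_compl]
  rintro huniv
  rw [huniv, Cardinal.mk_univ, Cardinal.mk_set_nat] at hlt
  exact hlt.false

theorem stage_spec {i : Stage} (h : Compatible (filterBefore i) (liveBefore i)) :
    Compatible (filterAfter i) (liveAfter i) ∧ Decides (stageSeq i) (stage i).1 := by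
  have hL := liveBefore_nonempty i
  have hstage : stage i = (h.exists_decides hL (stageSeq i)).choose := by
    rw [stage_eq, step, dif_pos ⟨h, hL⟩]
  rw [filterAfter, liveAfter, hstage]
  exact (h.exists_decides hL (stageSeq i)).choose_spec.2

theorem filterAfter_le_cofinite (i : Stage) : filterAfter i ≤ cofinite :=
  inf_le_left.trans inf_le_left

theorem antitone_filterAfter : Antitone filterAfter := by
  intro j i hji
  rcases hji.lt_or_eq with hji | rfl
  · have hbefore : filterBefore i ≤ filterBefore j :=
      inf_le_inf_left _ (biInf_mono fun k (hk : k < j) => hk.trans hji)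
    exact inf_le_left.trans (le_inf hbefore (inf_le_right.trans (iInf₂_le j hji)))
  · exact le_rfl

theorem compatible_before {i : Stage} (h : ∀ j < i, Compatible (filterAfter j) (liveAfter j)) :
    Compatible (filterBefore i) (liveBefore i) := by
  rcases isEmpty_or_nonempty (Iio i) with hi | hi
  · refine compatible_cofinite.mono (le_inf le_rfl (le_iInf₂ fun j hj => ?_)) (subset_univ _)
    exact (hi.false ⟨j, hj⟩).elim
  · refine (compatible_iInf (F := fun j : Iio i => filterAfter j) ?_ fun j => h j j.2).mono
      ?_ ?_
    · exact (antitone_filterAfter.comp_monotone (Subtype.mono_coe _)).directed_ge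
    · obtain ⟨j₀⟩ := hi
      exact le_inf (iInf_le_of_le j₀ (filterAfter_le_cofinite j₀))
        (le_iInf₂ fun j hj => iInf_le_of_le ⟨j, hj⟩ inf_le_right)
    · exact fun ρ hρ => Set.mem_iInter.2 fun j => ⟨fun k hk => hρ k (hk.trans j.2), hρ j j.2⟩

theorem compatible_after (i : Stage) : Compatible (filterAfter i) (liveAfter i) :=
  wellFounded_lt.induction i fun _ ih => (stage_spec (compatible_before ih)).1

theorem exists_ultrafilter_diagonalSet_mem :
    ∃ p : Ultrafilter ℕ, (p : Filter ℕ) ≤ cofinite ∧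
      ∀ σ : ℕ → Set ℕ, (∀ n, σ n ∈ p) → ∃ ρ, ∀ x, diagonalSet ρ σ x ∈ p := by
  have : Nonempty Stage := ⟨stageSeq.symm fun _ => ∅⟩
  have : (⨅ i, filterAfter i).NeBot :=
    iInf_neBot_of_directed' antitone_filterAfter.directed_ge fun i => (compatible_after i).neBot
  set p := Ultrafilter.of (⨅ i, filterAfter i)
  have hp : ∀ i, (p : Filter ℕ) ≤ filterAfter i := fun i =>
    (Ultrafilter.of_le _).trans (iInf_le _ i)
  refine ⟨p, (hp (stageSeq.symm fun _ => ∅)).trans (filterAfter_le_cofinite _), fun σ hσ => ?_⟩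
  set i := stageSeq.symm σ
  have hle : (p : Filter ℕ) ≤ (stage i).1 := (hp i).trans inf_le_right
  have hdec := (stage_spec (i := i) (compatible_before fun j _ => compatible_after j)).2
  rw [Equiv.apply_symm_apply] at hdec
  rcases hdec with ⟨n, hn⟩ | ⟨ρ, hρ⟩
  · exact (Ultrafilter.compl_mem_iff_notMem.1 (hle hn) (hσ n)).elim
  · exact ⟨ρ, fun x => hle (hρ x)⟩

end

end KunenOK

namespace OmegaStar

open Filter

/-- The basic clopen set `C*` of `ω*`. -/
def basic (C : Set ℕ) : Set OmegaStar := {q | C ∈ q.1}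

theorem isOpen_basic (C : Set ℕ) : IsOpen (basic C) :=
  (ultrafilter_isOpen_basic C).preimage continuous_subtype_val

theorem exists_basic_subset {q : OmegaStar} {U : Set OmegaStar} (hU : IsOpen U) (hq : q ∈ U) :
    ∃ C ∈ q.1, basic C ⊆ U := by
  obtain ⟨W, hW, rfl⟩ := isOpen_induced_iff.1 hU
  obtain ⟨-, ⟨C, rfl⟩, hqC, hCW⟩ := ultrafilterBasis_is_basis.exists_subset_of_mem_open hq hW
  exact ⟨C, hqC, fun r hr => hCW hr⟩

theorem notMem_of_finite (q : OmegaStar) {s : Set ℕ} (hs : s.Finite) : s ∉ q.1 := fun hmem => by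
  obtain ⟨a, -, ha⟩ := Ultrafilter.eq_pure_of_finite_mem hs hmem
  exact q.2 a ha

theorem isOKPoint_of_forall_antitone {κ : Cardinal} {p : OmegaStar}
    (h : ∀ C : ℕ → Set ℕ, Antitone C → (∀ n, C n ∈ p.1) →
      ∃ (ι : Type) (_ : Cardinal.mk ι = κ) (V : ι → Set ℕ), (∀ i, V i ∈ p.1) ∧
        ∀ s : Finset ι, s.Nonempty → ((⋂ i ∈ s, V i) \ C s.card).Finite) :
    IsOKPoint κ p := by
  intro U hU
  choose C₀ hC₀p hC₀U using fun n => exists_basic_subset (hU n).1 (hU n).2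
  set C : ℕ → Set ℕ := fun n => ⋂ k ∈ Set.Iic n, C₀ k
  have hC : Antitone C := fun _ _ hmn =>
    Set.biInter_subset_biInter_left (Set.Iic_subset_Iic.2 hmn)
  have hCp : ∀ n, C n ∈ p.1 := fun n => (biInter_mem (Set.finite_Iic n)).2 fun k _ => hC₀p k
  obtain ⟨ι, hι, V, hVp, hV⟩ := h C hC hCp
  refine ⟨ι, hι, fun i => basic (V i), fun i => ⟨isOpen_basic _, hVp i⟩,
    fun n hn s hs q hq => ?_⟩
  have hsV : (⋂ i ∈ s, V i) ∈ q.1 := (biInter_finset_mem s).2 (Set.mem_iInter₂.1 hq)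
  have hCq : C n ∈ q.1 := by
    by_contra hCq
    subst hs
    exact q.notMem_of_finite (hV s (Finset.card_pos.1 hn))
      (inter_mem hsV (Ultrafilter.compl_mem_iff_notMem.2 hCq))
  exact hC₀U n (mem_of_superset hCq (Set.biInter_subset_of_mem (Set.mem_Iic.2 le_rfl)))

end OmegaStar

/-- Kunen. There exists a `𝔠`-OK point in `ω*`. -/
theorem exists_continuum_OK_point : ∃ p : OmegaStar, IsOKPoint Cardinal.continuum p := by
  obtain ⟨p, hcof, hp⟩ := KunenOK.exists_ultrafilter_diagonalSet_mem
  have hfree : ∀ n, p ≠ pure n := fun n hpn =>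
    (hpn ▸ hcof) (Set.finite_singleton n).compl_mem_cofinite rfl
  refine ⟨⟨p, hfree⟩, OmegaStar.isOKPoint_of_forall_antitone fun C hC hCp => ?_⟩
  obtain ⟨ρ, hρ⟩ := hp C hCp
  exact ⟨Set ℕ, Cardinal.mk_set_nat, KunenOK.diagonalSet ρ C, hρ,
    fun s hs => KunenOK.finite_biInter_diagonalSet_diff hC ρ hs⟩
end

section
/- Let X be a regular Hausdorff (T₃) space satisfying the countable chain condition, and let p ∈ X be a non-isolated point. Then p is not an ω₁-OK point. -/
open MeasureTheory Topology ENNReal NNReal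

/-- A topological space is *ccc* if every family of pairwise disjoint nonempty open sets is
countable. -/
def CCC (X : Type*) [TopologicalSpace X] : Prop :=
  ∀ 𝒜 : Set (Set X), (∀ U ∈ 𝒜, IsOpen U ∧ U.Nonempty) → 𝒜.PairwiseDisjoint id → 𝒜.Countable

/-! Enumerate a maximal disjoint family of nonempty open sets whose closures miss `p`: by ccc it
is countable, `A₀, A₁, …`, and by regularity (and since `p` is not isolated) its union is dense.
Test the OK property on `Uₙ = X \ (cl A₀ ∪ ⋯ ∪ cl Aₙ₋₁)`. Every point of `Aₘ` lies outside
`Uₘ₊₁`, hence in at most `m` of the sets `V_α`. In a ccc space an open set all of whose points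
lie in at most `m` members of an open family meets only countably many of them: the maximal
finite sets of members with a common point in it give pairwise disjoint open sets. So only
countably many `V_α` meet the dense set `⋃ Aₘ`, while any other `V_α` is a nonempty open set. -/

open Set

theorem Finset.exists_subset_maximal_of_card_le {ι : Type*} {𝔼 : Set (Finset ι)} {n : ℕ}
    (h𝔼 : ∀ E ∈ 𝔼, E.card ≤ n) {E : Finset ι} (hE : E ∈ 𝔼) :
    ∃ M, E ⊆ M ∧ Maximal (· ∈ 𝔼) M := by
  obtain ⟨M, ⟨hM, hEM⟩, hmin⟩ := (measure fun M : Finset ι => n - M.card).wf.has_min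
    {M | M ∈ 𝔼 ∧ E ⊆ M} ⟨E, hE, subset_rfl⟩
  refine ⟨M, hEM, hM, fun M' hM' hMM' => ?_⟩
  have hcard : ¬ n - M'.card < n - M.card := hmin M' ⟨hM', hEM.trans hMM'⟩
  have := h𝔼 M' hM'
  exact (Finset.eq_of_subset_of_card_le hMM' (by omega)).ge

theorem Set.exists_maximal_pairwiseDisjoint_subset {α : Type*} (𝒜 : Set (Set α)) :
    ∃ 𝒟, Maximal (fun 𝒟 => 𝒟 ⊆ 𝒜 ∧ 𝒟.PairwiseDisjoint id) 𝒟 :=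
  zorn_subset _ fun c hc hchain =>
    ⟨⋃₀ c, ⟨sUnion_subset fun _ hd => (hc hd).1,
      (hchain.pairwiseDisjoint_sUnion id).2 fun _ hd => (hc hd).2⟩,
      fun _ hd => subset_sUnion_of_mem hd⟩

theorem Finset.card_le_of_forall_mem_of_biInter_subset {ι X : Type*} {V : ι → Set X}
    {U : ℕ → Set X}
    (hVU : ∀ n : ℕ, 1 ≤ n → ∀ s : Finset ι, s.card = n → (⋂ i ∈ s, V i) ⊆ U n)
    {x : X} {m : ℕ} (hx : x ∉ U (m + 1)) {s : Finset ι} (hs : ∀ i ∈ s, x ∈ V i) :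
    s.card ≤ m := by
  by_contra! hm
  obtain ⟨t, hts, htm⟩ := Finset.exists_subset_card_eq (show m + 1 ≤ s.card from hm)
  exact hx (hVU _ (Nat.le_add_left 1 m) t htm (mem_iInter₂.2 fun i hi => hs i (hts hi)))

theorem exists_isOpen_subset_notMem_closure {X : Type*} [TopologicalSpace X] [T1Space X]
    [RegularSpace X] {p : X} (hp : ¬ IsOpen ({p} : Set X)) {O : Set X} (hO : IsOpen O)
    (hne : O.Nonempty) : ∃ B ⊆ O, IsOpen B ∧ B.Nonempty ∧ p ∉ closure B := by
  obtain ⟨q, hqO, hqp⟩ : (O \ {p}).Nonempty :=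
    sdiff_nonempty.2 fun h => hp (hne.subset_singleton_iff.1 h ▸ hO)
  obtain ⟨B, ⟨hqB, hB⟩, hBO⟩ := (hasBasis_opens_closure q).mem_iff.1
    ((hO.sdiff isClosed_singleton).mem_nhds ⟨hqO, hqp⟩)
  exact ⟨B, subset_closure.trans (hBO.trans sdiff_subset), hB, ⟨q, hqB⟩,
    fun hpB => (hBO hpB).2 rfl⟩

namespace CCC

variable {X : Type*} [TopologicalSpace X]

theorem exists_countable_dense_sUnion (hccc : CCC X) {𝒜 : Set (Set X)}
    (h𝒜 : ∀ B ∈ 𝒜, IsOpen B ∧ B.Nonempty)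
    (hsub : ∀ O, IsOpen O → O.Nonempty → ∃ B ∈ 𝒜, B ⊆ O) :
    ∃ 𝒟 ⊆ 𝒜, 𝒟.Countable ∧ Dense (⋃₀ 𝒟) := by
  obtain ⟨𝒟, ⟨h𝒟𝒜, h𝒟⟩, hmax⟩ := exists_maximal_pairwiseDisjoint_subset 𝒜
  refine ⟨𝒟, h𝒟𝒜, hccc 𝒟 (fun B hB => h𝒜 B (h𝒟𝒜 hB)) h𝒟, ?_⟩
  refine dense_iff_inter_open.2 fun O hO hOne => ?_
  obtain ⟨B, hB𝒜, hBO⟩ := hsub O hO hOne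
  by_contra hmiss
  have hBdisj : ∀ D ∈ 𝒟, Disjoint B D := fun D hD =>
    disjoint_left.2 fun x hxB hxD =>
      hmiss ⟨x, hBO hxB, mem_sUnion_of_mem hxD hD⟩
  have hB𝒟 : B ∈ 𝒟 := hmax ⟨insert_subset hB𝒜 h𝒟𝒜,
    h𝒟.insert fun D hD _ => hBdisj D hD⟩ (subset_insert B 𝒟) (mem_insert B 𝒟)
  obtain ⟨x, hx⟩ := (h𝒜 B hB𝒜).2
  exact hmiss ⟨x, hBO hx, mem_sUnion_of_mem hx hB𝒟⟩

theorem exists_seq_dense_iUnion (hccc : CCC X) {𝒜 : Set (Set X)}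
    (h𝒜 : ∀ B ∈ 𝒜, IsOpen B ∧ B.Nonempty) (hne : 𝒜.Nonempty)
    (hsub : ∀ O, IsOpen O → O.Nonempty → ∃ B ∈ 𝒜, B ⊆ O) :
    ∃ A : ℕ → Set X, (∀ m, A m ∈ 𝒜) ∧ Dense (⋃ m, A m) := by
  obtain ⟨𝒟, h𝒟𝒜, h𝒟, hdense⟩ := hccc.exists_countable_dense_sUnion h𝒜 hsub
  obtain ⟨B₀, hB₀⟩ := hne
  obtain ⟨A, hA⟩ := (h𝒟.insert B₀).exists_eq_range (insert_nonempty B₀ 𝒟)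
  refine ⟨A, fun m => insert_subset hB₀ h𝒟𝒜 (hA ▸ mem_range_self m), ?_⟩
  rw [← sUnion_range, ← hA]
  exact hdense.mono (sUnion_mono (subset_insert B₀ 𝒟))

theorem countable_setOf_inter_nonempty (hccc : CCC X) {ι : Type*} {V : ι → Set X}
    (hV : ∀ i, IsOpen (V i)) {W : Set X} (hW : IsOpen W) {n : ℕ}
    (hn : ∀ x ∈ W, ∀ s : Finset ι, (∀ i ∈ s, x ∈ V i) → s.card ≤ n) :
    {i | (V i ∩ W).Nonempty}.Countable := by
  classical
  set O : Finset ι → Set X := fun E => W ∩ ⋂ i ∈ E, V i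
  set 𝔼 : Set (Finset ι) := {E | (O E).Nonempty}
  set 𝔐 : Set (Finset ι) := {M | Maximal (· ∈ 𝔼) M}
  have h𝔼 : ∀ E ∈ 𝔼, E.card ≤ n := fun E ⟨x, hxW, hxV⟩ =>
    hn x hxW E fun i hi => mem_iInter₂.1 hxV i hi
  -- two maximal `E` whose sets `O E` meet are both equal to their union
  have hmeet : ∀ M ∈ 𝔐, ∀ M' ∈ 𝔐, (O M ∩ O M').Nonempty → M = M' := by
    rintro M hM M' hM' ⟨x, ⟨hxW, hxM⟩, -, hxM'⟩
    have hunion : M ∪ M' ∈ 𝔼 := ⟨x, hxW, mem_iInter₂.2 fun i hi =>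
      (Finset.mem_union.1 hi).elim (mem_iInter₂.1 hxM i) (mem_iInter₂.1 hxM' i)⟩
    exact (hM.eq_of_le hunion Finset.subset_union_left).trans
      (hM'.eq_of_le hunion Finset.subset_union_right).symm
  have hinj : InjOn O 𝔐 := fun M hM M' hM' h =>
    hmeet M hM M' hM' (by rw [h, inter_self]; exact hM'.prop)
  have h𝔐 : 𝔐.Countable := by
    refine countable_of_injective_of_countable_image hinj (hccc _ ?_ ?_)
    · rintro _ ⟨M, hM, rfl⟩
      exact ⟨hW.inter (isOpen_biInter_finset fun i _ => hV i), hM.prop⟩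
    · refine (hinj.pairwiseDisjoint_image).2 fun M hM M' hM' hne => ?_
      exact not_not.1 fun h => hne (hmeet M hM M' hM' (not_disjoint_iff_nonempty_inter.1 h))
  refine (h𝔐.biUnion fun M _ => M.countable_toSet).mono fun i ⟨x, hxV, hxW⟩ => ?_
  obtain ⟨M, hiM, hM⟩ := Finset.exists_subset_maximal_of_card_le h𝔼
    (show {i} ∈ 𝔼 from ⟨x, hxW, by simpa using hxV⟩)
  exact mem_biUnion hM (Finset.singleton_subset_iff.1 hiM)

end CCC

/-- Kunen. In a ccc regular Hausdorff space, no non-isolated point is an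
`ω₁`-OK point. -/
theorem not_omega1_OK_of_ccc {X : Type*} [TopologicalSpace X] [T3Space X] (hccc : CCC X)
    (p : X) (hp : ¬ IsOpen ({p} : Set X)) : ¬ IsOKPoint (Cardinal.aleph 1) p := by
  intro hOK
  set 𝒜 : Set (Set X) := {B | IsOpen B ∧ B.Nonempty ∧ p ∉ closure B}
  have hsub : ∀ O, IsOpen O → O.Nonempty → ∃ B ∈ 𝒜, B ⊆ O := fun O hO hne =>
    let ⟨B, hBO, hB⟩ := exists_isOpen_subset_notMem_closure hp hO hne
    ⟨B, hB, hBO⟩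
  obtain ⟨A, hA𝒜, hAdense⟩ := hccc.exists_seq_dense_iUnion (fun B hB => ⟨hB.1, hB.2.1⟩)
    (let ⟨B, hB, _⟩ := hsub univ isOpen_univ ⟨p, trivial⟩; ⟨B, hB⟩) hsub
  set U : ℕ → Set X := fun n => (⋃ k ∈ Finset.range n, closure (A k))ᶜ
  have hU : ∀ n, IsOpen (U n) ∧ p ∈ U n := fun n =>
    ⟨(isClosed_biUnion_finset fun k _ => isClosed_closure).isOpen_compl,
      by simpa [U] using fun k _ => (hA𝒜 k).2.2⟩
  obtain ⟨ι, hι, V, hV, hVU⟩ := hOK U hU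
  have hAU : ∀ m, ∀ x ∈ A m, x ∉ U (m + 1) := fun m x hx hxU =>
    hxU (mem_biUnion (Finset.self_mem_range_succ m) (subset_closure hx))
  have hcount : (⋃ m, {i | (V i ∩ A m).Nonempty}).Countable :=
    countable_iUnion fun m => hccc.countable_setOf_inter_nonempty (fun i => (hV i).1)
      (hA𝒜 m).1 fun x hx _ => Finset.card_le_of_forall_mem_of_biInter_subset hVU (hAU m x hx)
  have : Uncountable ι := Cardinal.aleph0_lt_mk_iff.1 (hι ▸ Cardinal.aleph0_lt_aleph_one)
  obtain ⟨i, hi⟩ := (ne_univ_iff_exists_notMem (⋃ m, {i | (V i ∩ A m).Nonempty})).1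
    fun h => not_countable_univ (h ▸ hcount)
  obtain ⟨x, hxV, hxA⟩ := hAdense.inter_open_nonempty (V i) (hV i).1 ⟨p, (hV i).2⟩
  obtain ⟨m, hm⟩ := mem_iUnion.1 hxA
  exact hi (mem_iUnion.2 ⟨m, x, hxV, hm⟩)
end

section
/- Let X be a topological space, κ an infinite cardinal, n ∈ ω, and let 𝒜 be a family of nonempty open subsets of X with |𝒜| = κ such that the intersection of any n pairwise distinct members of 𝒜 is empty. Then X contains κ many pairwise disjoint nonempty open subsets. -/
/-!
By hypothesis every point lies in at most `n - 1` members of `𝒜`. By induction on such a bound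
`m`, any family `𝒜` of nonempty open sets of point-order at most `m` yields a cellular family `ℬ`
with `#𝒜 ≤ #ℬ * m!`. Take a maximal pairwise disjoint `D ⊆ 𝒜`, so that every member of `𝒜`
meets some `V ∈ D`. The nonempty traces `U ∩ V` (`U ≠ V`) have point-order at most `m - 1`, since
their points already lie in `V`, and for the same reason a trace comes from at most `m - 1`
members `U`. Hence at most `#traces * (m - 1) + 1` members meet `V`, while the induction
hypothesis gives a cellular family inside `V` with `#traces ≤ #ℬ_V * (m - 1)!` (or `{V}` when
there are no traces); as `(m - 1) * (m - 1)! + 1 ≤ m!`, the union of these families over `D`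
works. For infinite `κ` the finite factor `(n - 1)!` is absorbed.
-/

open Cardinal Set

universe u

theorem Cardinal.sum_mul {ι : Type u} (f : ι → Cardinal.{u}) (a : Cardinal.{u}) :
    sum f * a = sum fun i => f i * a := by
  obtain ⟨α, rfl⟩ : ∃ α : ι → Type u, f = fun i => #(α i) :=
    ⟨fun i => (f i).out, funext fun i => (mk_out _).symm⟩
  induction a using Cardinal.inductionOn with
  | _ β => simpa only [← mk_sigma, mul_def] using mk_congr (Equiv.sigmaProdDistrib α β)

theorem Set.exists_pairwiseDisjoint_subset_forall_inter_nonempty {α : Type*}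
    {𝒜 : Set (Set α)} (h𝒜 : ∀ U ∈ 𝒜, U.Nonempty) :
    ∃ D ⊆ 𝒜, D.PairwiseDisjoint id ∧ ∀ U ∈ 𝒜, ∃ V ∈ D, (U ∩ V).Nonempty := by
  obtain ⟨D, hD⟩ := zorn_subset {D | D ⊆ 𝒜 ∧ D.PairwiseDisjoint id} fun c hc hchain =>
    ⟨⋃₀ c, ⟨sUnion_subset fun D hD => (hc hD).1,
      (hchain.pairwiseDisjoint_sUnion id).2 fun D hD => (hc hD).2⟩,
      fun _ => subset_sUnion_of_mem⟩
  refine ⟨D, hD.prop.1, hD.prop.2, fun U hU => ?_⟩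
  by_contra! hdisj
  have hUD : U ∈ D := hD.mem_of_prop_insert ⟨insert_subset hU hD.prop.1,
    hD.prop.2.insert fun V hV _ => disjoint_iff_inter_eq_empty.2 (hdisj V hV)⟩
  simpa [(h𝒜 U hU).ne_empty] using hdisj U hUD

theorem Cardinal.le_of_le_mul_natCast {κ c : Cardinal} {k : ℕ} (hκ : ℵ₀ ≤ κ) (h : κ ≤ c * k) :
    κ ≤ c := by
  rcases lt_or_ge c ℵ₀ with hc | hc
  · exact absurd (h.trans_lt (mul_lt_aleph0 hc natCast_lt_aleph0)) hκ.not_gt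
  · calc κ ≤ c * k := h
      _ ≤ max c k := mul_le_max_of_aleph0_le_left hc
      _ = c := max_eq_left (natCast_lt_aleph0.le.trans hc)

-- For `n = 0` the hypothesis at `S = ∅` makes `α` empty, so the truncated `n - 1` is harmless.
theorem mk_setOf_mem_le_of_sInter_eq_empty {α : Type u} {𝒜 : Set (Set α)} {n : ℕ}
    (h𝒜 : ∀ S : Finset (Set α), ↑S ⊆ 𝒜 → S.card = n → ⋂₀ (S : Set (Set α)) = ∅) (x : α) :
    #{U ∈ 𝒜 | x ∈ U} ≤ (n - 1 : ℕ) := by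
  by_contra! hlt
  have hn : (n : Cardinal) ≤ #{U ∈ 𝒜 | x ∈ U} :=
    calc (n : Cardinal) ≤ (n - 1 : ℕ) + 1 := by exact_mod_cast (by omega : n ≤ n - 1 + 1)
      _ ≤ _ := succ_natCast (n - 1) ▸ Order.succ_le_of_lt hlt
  obtain ⟨S, hS, hSn⟩ := le_mk_iff_exists_subset.1 hn
  obtain ⟨t, rfl, rfl⟩ := mk_set_eq_nat_iff_finset.1 hSn
  have hx : x ∈ ⋂₀ (t : Set (Set α)) := fun U hU => (hS hU).2
  simp [h𝒜 t (fun U hU => (hS hU).1) rfl] at hx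

section Traces

variable {α : Type u} {𝒜 : Set (Set α)} {V : Set α} {n : ℕ}

def traces (𝒜 : Set (Set α)) (V : Set α) : Set (Set α) := (· ∩ V) '' (𝒜 \ {V}) \ {∅}

theorem mem_traces {W : Set α} : W ∈ traces 𝒜 V ↔ (∃ U ∈ 𝒜, U ≠ V ∧ U ∩ V = W) ∧ W.Nonempty := by
  simp [traces, nonempty_iff_ne_empty, and_assoc]

theorem subset_of_mem_traces {W : Set α} (hW : W ∈ traces 𝒜 V) : W ⊆ V := by
  obtain ⟨⟨U, -, -, rfl⟩, -⟩ := mem_traces.1 hW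
  exact inter_subset_right

theorem mk_setOf_mem_diff_singleton_le {x : α} (hV : V ∈ 𝒜) (hx : x ∈ V)
    (h : #{U ∈ 𝒜 | x ∈ U} ≤ n + 1) : #{U ∈ 𝒜 \ {V} | x ∈ U} ≤ n := by
  have hins : {U ∈ 𝒜 | x ∈ U} = insert V {U ∈ 𝒜 \ {V} | x ∈ U} := by
    ext U; by_cases hUV : U = V <;> simp [hUV, hV, hx]
  rw [hins, mk_insert (by simp)] at h
  exact add_one_le_add_one_iff.1 h

theorem mk_setOf_mem_traces_le (hV : V ∈ 𝒜) (h : ∀ x, #{U ∈ 𝒜 | x ∈ U} ≤ n + 1) (x : α) :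
    #{W ∈ traces 𝒜 V | x ∈ W} ≤ n := by
  by_cases hx : x ∈ V
  · refine (mk_le_mk_of_subset ?_).trans ((mk_image_le (f := (· ∩ V))).trans
      (mk_setOf_mem_diff_singleton_le hV hx (h x)))
    rintro W ⟨hW, hxW⟩
    obtain ⟨⟨U, hU, hUV, rfl⟩, -⟩ := mem_traces.1 hW
    exact ⟨U, ⟨⟨hU, hUV⟩, hxW.1⟩, rfl⟩
  · have : {W ∈ traces 𝒜 V | x ∈ W} = ∅ :=
      eq_empty_of_forall_notMem fun W hW => hx (subset_of_mem_traces hW.1 hW.2)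
    simp [this]

theorem mk_setOf_inter_nonempty_le (hV : V ∈ 𝒜) (h : ∀ x, #{U ∈ 𝒜 | x ∈ U} ≤ n + 1) :
    #{U ∈ 𝒜 | (U ∩ V).Nonempty} ≤ #(traces 𝒜 V) * n + 1 := by
  have hsub : {U ∈ 𝒜 | (U ∩ V).Nonempty} ⊆ insert V {U ∈ 𝒜 \ {V} | (U ∩ V).Nonempty} := by
    rintro U ⟨hU, hUV⟩
    by_cases hUV' : U = V <;> simp_all
  refine (mk_le_mk_of_subset hsub).trans (mk_insert_le.trans (add_le_add_left ?_ 1))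
  let trace : {U ∈ 𝒜 \ {V} | (U ∩ V).Nonempty} → traces 𝒜 V := fun U =>
    ⟨U.1 ∩ V, mem_traces.2 ⟨⟨U.1, U.2.1.1, U.2.1.2, rfl⟩, U.2.2⟩⟩
  refine mk_le_mk_mul_of_mk_preimage_le trace fun W => ?_
  obtain ⟨x, hxW⟩ := (mem_traces.1 W.2).2
  refine (mk_le_of_injective (f := fun U : trace ⁻¹' {W} =>
    (⟨U.1.1, U.1.2.1, ?_⟩ : {U ∈ 𝒜 \ {V} | x ∈ U})) ?_).trans
    (mk_setOf_mem_diff_singleton_le hV (subset_of_mem_traces W.2 hxW) (h x))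
  · have hUW : U.1.1 ∩ V = W := congrArg Subtype.val U.2
    exact (hUW ▸ hxW).1
  · intro U U' hUU'
    exact Subtype.ext (Subtype.ext (congrArg Subtype.val hUU' :))

end Traces

section Cellular

open Nat Function

variable {X : Type u} [TopologicalSpace X]

def IsCellular (ℬ : Set (Set X)) : Prop :=
  ℬ.PairwiseDisjoint id ∧ ∀ W ∈ ℬ, IsOpen W ∧ W.Nonempty

theorem isCellular_empty : IsCellular (∅ : Set (Set X)) :=
  ⟨pairwiseDisjoint_empty, by simp⟩

theorem isCellular_singleton {V : Set X} (hV : IsOpen V ∧ V.Nonempty) : IsCellular {V} :=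
  ⟨pairwiseDisjoint_singleton _ _, by simpa⟩

section Union

variable {ι : Type*} {V : ι → Set X} {𝒞 : ι → Set (Set X)}

theorem isCellular_iUnion (hV : Pairwise (Disjoint on V)) (h𝒞 : ∀ i, IsCellular (𝒞 i))
    (h𝒞V : ∀ i, ∀ W ∈ 𝒞 i, W ⊆ V i) : IsCellular (⋃ i, 𝒞 i) := by
  refine ⟨fun W hW W' hW' hne => ?_, fun W hW => ?_⟩
  · obtain ⟨i, hi⟩ := mem_iUnion.1 hW
    obtain ⟨j, hj⟩ := mem_iUnion.1 hW'
    obtain rfl | hij := eq_or_ne i j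
    · exact (h𝒞 i).1 hi hj hne
    · exact (hV hij).mono (h𝒞V i W hi) (h𝒞V j W' hj)
  · obtain ⟨i, hi⟩ := mem_iUnion.1 hW
    exact (h𝒞 i).2 W hi

theorem pairwise_disjoint_of_isCellular (hV : Pairwise (Disjoint on V))
    (h𝒞 : ∀ i, IsCellular (𝒞 i)) (h𝒞V : ∀ i, ∀ W ∈ 𝒞 i, W ⊆ V i) :
    Pairwise (Disjoint on 𝒞) := by
  refine fun i j hij => disjoint_left.2 fun W hWi hWj => ?_
  obtain ⟨x, hx⟩ := ((h𝒞 i).2 W hWi).2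
  exact disjoint_left.1 (hV hij) (h𝒞V i W hWi hx) (h𝒞V j W hWj hx)

end Union

variable {𝒜 : Set (Set X)} {V : Set X} {n : ℕ}

theorem isOpen_and_nonempty_of_mem_traces (hopen : ∀ U ∈ 𝒜, IsOpen U ∧ U.Nonempty)
    (hV : IsOpen V) : ∀ W ∈ traces 𝒜 V, IsOpen W ∧ W.Nonempty := by
  intro W hW
  obtain ⟨⟨U, hU, -, rfl⟩, hne⟩ := mem_traces.1 hW
  exact ⟨(hopen U hU).1.inter hV, hne⟩

theorem exists_isCellular_subset_of_traces (hopen : ∀ U ∈ 𝒜, IsOpen U ∧ U.Nonempty)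
    (hV : V ∈ 𝒜) (h : ∀ x, #{U ∈ 𝒜 | x ∈ U} ≤ n + 1) {ℬ : Set (Set X)} (hℬ : IsCellular ℬ)
    (hℬV : ∀ W ∈ ℬ, W ⊆ ⋃₀ traces 𝒜 V) (hcard : #(traces 𝒜 V) ≤ #ℬ * (n ! : ℕ)) :
    ∃ 𝒞, IsCellular 𝒞 ∧ (∀ W ∈ 𝒞, W ⊆ V) ∧
      #{U ∈ 𝒜 | (U ∩ V).Nonempty} ≤ #𝒞 * ((n + 1)! : ℕ) := by
  rcases (traces 𝒜 V).eq_empty_or_nonempty with hT | hT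
  · refine ⟨{V}, isCellular_singleton (hopen V hV), by simp, ?_⟩
    have hle := mk_setOf_inter_nonempty_le hV h
    rw [hT, mk_eq_zero (∅ : Set (Set X)), zero_mul, zero_add] at hle
    rw [mk_singleton, one_mul]
    exact hle.trans (Nat.one_le_cast.2 (n + 1).factorial_pos)
  · refine ⟨ℬ, hℬ, fun W hW => (hℬV W hW).trans (sUnion_subset fun _ => subset_of_mem_traces),
      ?_⟩
    have hℬ_pos : 1 ≤ #ℬ * (n ! : ℕ) :=
      (Cardinal.one_le_iff_ne_zero.2 (mk_ne_zero_iff.2 hT.to_subtype)).trans hcard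
    calc #{U ∈ 𝒜 | (U ∩ V).Nonempty} ≤ #(traces 𝒜 V) * n + 1 := mk_setOf_inter_nonempty_le hV h
      _ ≤ #ℬ * (n ! : ℕ) * n + #ℬ * (n ! : ℕ) := add_le_add (mul_le_mul_left hcard _) hℬ_pos
      _ = #ℬ * ((n + 1)! : ℕ) := by push_cast [factorial_succ]; ring

theorem exists_isCellular_mk_le_mul_factorial (n : ℕ)
    (hopen : ∀ U ∈ 𝒜, IsOpen U ∧ U.Nonempty) (h : ∀ x, #{U ∈ 𝒜 | x ∈ U} ≤ n) :
    ∃ ℬ, IsCellular ℬ ∧ (∀ W ∈ ℬ, W ⊆ ⋃₀ 𝒜) ∧ #𝒜 ≤ #ℬ * (n ! : ℕ) := by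
  induction n generalizing 𝒜 with
  | zero =>
    have h𝒜 : 𝒜 = ∅ := eq_empty_of_forall_notMem fun U hU => by
      obtain ⟨x, hx⟩ := (hopen U hU).2
      have hx𝒜 : {U ∈ 𝒜 | x ∈ U}.Nonempty := ⟨U, hU, hx⟩
      exact mk_ne_zero_iff.2 hx𝒜.to_subtype (nonpos_iff_eq_zero.1 (by exact_mod_cast h x))
    exact ⟨∅, isCellular_empty, by simp, by simp [h𝒜]⟩
  | succ n ih =>
    obtain ⟨D, hD𝒜, hDdisj, hmeet⟩ :=
      exists_pairwiseDisjoint_subset_forall_inter_nonempty fun U hU => (hopen U hU).2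
    have h' : ∀ x, #{U ∈ 𝒜 | x ∈ U} ≤ n + 1 := by exact_mod_cast h
    have hlocal : ∀ V : D, ∃ 𝒞, IsCellular 𝒞 ∧ (∀ W ∈ 𝒞, W ⊆ (V : Set X)) ∧
        #{U ∈ 𝒜 | (U ∩ V).Nonempty} ≤ #𝒞 * ((n + 1)! : ℕ) := by
      rintro ⟨V, hV⟩
      obtain ⟨ℬ, hℬ, hℬV, hcard⟩ :=
        ih (isOpen_and_nonempty_of_mem_traces hopen (hopen V (hD𝒜 hV)).1)
          (mk_setOf_mem_traces_le (hD𝒜 hV) h')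
      exact exists_isCellular_subset_of_traces hopen (hD𝒜 hV) h' hℬ hℬV hcard
    choose 𝒞 h𝒞 h𝒞V h𝒞card using hlocal
    have hDdisj' : Pairwise (Disjoint on fun V : D => (V : Set X)) := hDdisj.subtype _ _
    refine ⟨⋃ V, 𝒞 V, isCellular_iUnion hDdisj' h𝒞 h𝒞V, ?_, ?_⟩
    · rintro W ⟨-, ⟨V, rfl⟩, hW⟩
      exact (h𝒞V V W hW).trans (subset_sUnion_of_mem (hD𝒜 V.2))
    · calc #𝒜 ≤ #(⋃ V : D, {U ∈ 𝒜 | (U ∩ V).Nonempty}) := mk_le_mk_of_subset fun U hU => by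
            obtain ⟨V, hV, hUV⟩ := hmeet U hU
            exact mem_iUnion.2 ⟨⟨V, hV⟩, hU, hUV⟩
        _ ≤ sum fun V : D => #{U ∈ 𝒜 | (U ∩ V).Nonempty} := mk_iUnion_le_sum_mk
        _ ≤ sum fun V => #(𝒞 V) * ((n + 1)! : ℕ) := sum_le_sum _ _ h𝒞card
        _ = #(⋃ V, 𝒞 V) * ((n + 1)! : ℕ) := by
          rw [← sum_mul, mk_iUnion_eq_sum_mk (pairwise_disjoint_of_isCellular hDdisj' h𝒞 h𝒞V)]

end Cellular

/-- If `𝒜` is a family of `κ` many nonempty open subsets of `X` (`κ`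
infinite) such that any `n` pairwise distinct members of `𝒜` have empty intersection, then `X`
contains `κ` many pairwise disjoint nonempty open sets. -/
theorem exists_disjoint_family_of_n_empty_intersections {X : Type*} [TopologicalSpace X]
    (κ : Cardinal) (hκ : Cardinal.aleph0 ≤ κ) (n : ℕ)
    (𝒜 : Set (Set X)) (hcard : Cardinal.mk 𝒜 = κ)
    (hopen : ∀ U ∈ 𝒜, IsOpen U ∧ U.Nonempty)
    (hint : ∀ S : Finset (Set X), ↑S ⊆ 𝒜 → S.card = n → ⋂₀ (S : Set (Set X)) = ∅) :
    ∃ ℬ : Set (Set X), Cardinal.mk ℬ = κ ∧ (∀ U ∈ ℬ, IsOpen U ∧ U.Nonempty) ∧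
      ℬ.PairwiseDisjoint id := by
  obtain ⟨ℬ, hℬ, -, hℬcard⟩ := exists_isCellular_mk_le_mul_factorial (n - 1) hopen
    (mk_setOf_mem_le_of_sInter_eq_empty hint)
  obtain ⟨𝒞, h𝒞ℬ, h𝒞⟩ := le_mk_iff_exists_subset.1 (le_of_le_mul_natCast hκ (hcard ▸ hℬcard))
  exact ⟨𝒞, h𝒞, fun U hU => hℬ.2 U (h𝒞ℬ hU), hℬ.1.subset h𝒞ℬ⟩
end

section
/- Let μ be a non-atomic finitely additive probability measure on the Boolean algebra of clopen subsets of 2^ω. Then for every k ≥ 1 and every ε > 0 there is a partition {S₁, …, S_k} of 2^ω into clopen sets such that |μ(S_i) − 1/k| < ε for every i ≤ k. -/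
/-!
Enumerate a clopen partition `t₀, t₁, …, t_{n-1}` of `2^ω` into pieces of measure `< ε`. The
measures of the unions `U p = t₀ ∪ … ∪ t_{p-1}` increase from `0` to `1` in steps `< ε`, so cutting
the chain `(U p)` where its measure first reaches `i / k` gives clopen sets
`∅ = V₀ ⊆ V₁ ⊆ … ⊆ V_k = 2^ω` with `i / k ≤ μ V_i < i / k + ε`. The differences
`V_{i+1} \ V_i` form the required partition.
-/

open Set

section Sets

variable {α : Type*}

theorem Monotone.pairwise_disjoint_diff_succ {V : ℕ → Set α} (hV : Monotone V) (k : ℕ) :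
    Pairwise (Function.onFun Disjoint fun i : Fin k => V (i + 1) \ V i) :=
  Pairwise.of_lt fun _ _ hij =>
    disjoint_sdiff_right.mono_left (sdiff_subset.trans (hV (Nat.succ_le_of_lt hij)))

theorem iUnion_diff_succ_eq_univ {V : ℕ → Set α} (h0 : V 0 = ∅) {k : ℕ} (hk : V k = univ) :
    ⋃ i : Fin k, V (i + 1) \ V i = univ := by
  classical
  refine eq_univ_of_forall fun x => ?_
  have hx : ∃ p, x ∈ V p := ⟨k, hk ▸ mem_univ x⟩
  obtain ⟨p, hp⟩ : ∃ p, Nat.find hx = p + 1 := Nat.exists_eq_succ_of_ne_zero (by simp [h0])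
  have hpk : p < k := by
    have := Nat.find_min' hx (hk ▸ mem_univ x : x ∈ V k)
    omega
  exact mem_iUnion.2
    ⟨⟨p, hpk⟩, hp ▸ Nat.find_spec hx, Nat.find_min hx (hp ▸ p.lt_succ_self)⟩

theorem Finset.exists_seq_pairwise_disjoint {P : Finset (Set α)}
    (hP : (P : Set (Set α)).PairwiseDisjoint id) :
    ∃ t : ℕ → Set α, Pairwise (Function.onFun Disjoint t) ∧ (∀ j, t j = ∅ ∨ t j ∈ P) ∧
      ⋃ j < P.card, t j = ⋃₀ P := by
  set L := P.toList
  have hL : L.length = P.card := P.length_toList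
  have hin : ∀ j (h : j < L.length), L.getD j ∅ = L[j] := fun j h => L.getD_eq_getElem ∅ h
  have hout : ∀ j, L.length ≤ j → L.getD j ∅ = ∅ := fun j h => L.getD_eq_default ∅ h
  have hmem : ∀ j (h : j < L.length), L[j] ∈ P := fun j h =>
    Finset.mem_toList.1 (List.getElem_mem h)
  refine ⟨fun j => L.getD j ∅, fun i j hij => ?_, fun j => ?_, ?_⟩
  · show Disjoint (L.getD i ∅) (L.getD j ∅)
    rcases lt_or_ge i L.length with hi | hi
    · rcases lt_or_ge j L.length with hj | hj
      · rw [hin i hi, hin j hj]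
        exact hP (hmem i hi) (hmem j hj) (P.nodup_toList.getElem_inj_iff.not.2 hij)
      · rw [hout j hj]
        exact disjoint_empty _
    · rw [hout i hi]
      exact empty_disjoint _
  · show L.getD j ∅ = ∅ ∨ L.getD j ∅ ∈ P
    rcases lt_or_ge j L.length with hj | hj
    · exact Or.inr (hin j hj ▸ hmem j hj)
    · exact Or.inl (hout j hj)
  · ext x
    simp only [mem_iUnion, mem_sUnion, Finset.mem_coe, exists_prop]
    constructor
    · rintro ⟨j, hj, hx⟩
      rw [← hL] at hj
      exact ⟨_, hmem j hj, hin j hj ▸ hx⟩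
    · rintro ⟨s, hs, hx⟩
      obtain ⟨j, hj, rfl⟩ := List.mem_iff_getElem.1 (Finset.mem_toList.2 hs)
      exact ⟨j, hL ▸ hj, (hin j hj).symm ▸ hx⟩

end Sets

theorem exists_monotone_cuts {s x : ℕ → ℝ} {ε : ℝ} {n k : ℕ} (hk : 0 < k) (hε : 0 < ε)
    (hs : Monotone s) (hstep : ∀ p < n, s (p + 1) < s p + ε) (hx : Monotone x)
    (h0 : s 0 = x 0) (hn : s n = x k) :
    ∃ c : ℕ → ℕ, Monotone c ∧ c 0 = 0 ∧ c k = n ∧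
      ∀ i ≤ k, x i ≤ s (c i) ∧ s (c i) < x i + ε := by
  classical
  -- The disjunct `n ≤ p` forces `c k = n` even when `s` reaches `x k` before `n`.
  let P : ℕ → ℕ → Prop := fun i p => (i < k ∧ x i ≤ s p) ∨ n ≤ p
  have hP : ∀ i, ∃ p, P i p := fun i => ⟨n, Or.inr le_rfl⟩
  have hle : ∀ i, Nat.find (hP i) ≤ n := fun i => Nat.find_min' _ (Or.inr le_rfl)
  refine ⟨fun i => Nat.find (hP i), fun i j hij => Nat.find_mono ?_, ?_, ?_,
    fun i hi => ⟨?_, ?_⟩⟩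
  · rintro p (⟨hj, hxp⟩ | hp)
    exacts [Or.inl ⟨hij.trans_lt hj, (hx hij).trans hxp⟩, Or.inr hp]
  · simp [P, hk, h0]
  · exact le_antisymm (hle k) ((Nat.find_spec (hP k)).resolve_left fun h => h.1.false)
  · rcases Nat.find_spec (hP i) with ⟨-, h⟩ | h
    · exact h
    · calc x i ≤ x k := hx hi
        _ = s n := hn.symm
        _ ≤ s _ := hs h
  · dsimp only
    rcases (Nat.find (hP i)).eq_zero_or_pos with hc | hc
    · rw [hc, h0]
      linarith [hx (Nat.zero_le i)]
    obtain ⟨p, hp⟩ := Nat.exists_eq_add_one.mpr hc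
    have hmin : ¬P i p := Nat.find_min (hP i) (hp ▸ p.lt_succ_self)
    simp only [P, not_or, not_and, not_le] at hmin
    rw [hp]
    rcases hi.lt_or_eq with hik | rfl
    · linarith [hstep p hmin.2, hmin.1 hik]
    · linarith [hs (hp ▸ hle i : p + 1 ≤ n)]

section Additive

variable {α : Type*} [TopologicalSpace α]

def IsAdditiveOnClopens (m : Set α → ℝ) : Prop :=
  ∀ s t : Set α, IsClopen s → IsClopen t → Disjoint s t → m (s ∪ t) = m s + m t

variable {m : Set α → ℝ}

theorem IsAdditiveOnClopens.map_empty (hm : IsAdditiveOnClopens m) : m ∅ = 0 := by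
  have := hm ∅ ∅ isClopen_empty isClopen_empty (disjoint_empty _)
  rw [union_empty] at this
  linarith

theorem IsAdditiveOnClopens.map_diff (hm : IsAdditiveOnClopens m) {s t : Set α}
    (hs : IsClopen s) (ht : IsClopen t) (hst : s ⊆ t) : m (t \ s) = m t - m s := by
  have := hm s (t \ s) hs (ht.diff hs) disjoint_sdiff_right
  rw [union_sdiff_cancel hst] at this
  linarith

theorem isClopen_biUnion_lt {t : ℕ → Set α} (ht : ∀ j, IsClopen (t j)) (p : ℕ) :
    IsClopen (⋃ j < p, t j) :=
  (finite_lt_nat p).isClopen_biUnion fun j _ => ht j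

theorem IsAdditiveOnClopens.map_biUnion_lt_succ (hm : IsAdditiveOnClopens m)
    {t : ℕ → Set α} (ht : ∀ j, IsClopen (t j)) (hdisj : Pairwise (Function.onFun Disjoint t))
    (p : ℕ) : m (⋃ j < p + 1, t j) = m (⋃ j < p, t j) + m (t p) := by
  rw [biUnion_lt_succ]
  exact hm _ _ (isClopen_biUnion_lt ht p) (ht p)
    (disjoint_iUnion₂_left.2 fun _ hj => hdisj hj.ne)

theorem IsAdditiveOnClopens.exists_clopen_chain (hm : IsAdditiveOnClopens m)
    (hnn : ∀ s : Set α, IsClopen s → 0 ≤ m s) (hone : m univ = 1) {ε : ℝ} (hε : 0 < ε)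
    {P : Finset (Set α)} (hPd : (P : Set (Set α)).PairwiseDisjoint id)
    (hPm : ∀ s ∈ P, IsClopen s ∧ m s < ε) (hPU : ⋃₀ (P : Set (Set α)) = univ)
    {k : ℕ} (hk : 0 < k) :
    ∃ V : ℕ → Set α, Monotone V ∧ (∀ i, IsClopen (V i)) ∧ V 0 = ∅ ∧ V k = univ ∧
      ∀ i ≤ k, (i : ℝ) / k ≤ m (V i) ∧ m (V i) < i / k + ε := by
  obtain ⟨t, htd, htP, htU⟩ := P.exists_seq_pairwise_disjoint hPd
  have ht : ∀ j, IsClopen (t j) ∧ m (t j) < ε := fun j =>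
    (htP j).elim (fun h => h ▸ ⟨isClopen_empty, hm.map_empty ▸ hε⟩) (hPm _)
  let U : ℕ → Set α := fun p => ⋃ j < p, t j
  have hUc : ∀ p, IsClopen (U p) := isClopen_biUnion_lt fun j => (ht j).1
  have hU : Monotone U := fun _ _ hpq =>
    biUnion_subset_biUnion_left fun _ hj => lt_of_lt_of_le hj hpq
  have hU0 : U 0 = ∅ := by simp [U]
  have hUn : U P.card = univ := htU.trans hPU
  have hUs : ∀ p, m (U (p + 1)) = m (U p) + m (t p) :=
    hm.map_biUnion_lt_succ (fun j => (ht j).1) htd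
  have hkpos : (0 : ℝ) < k := by exact_mod_cast hk
  obtain ⟨c, hc, hc0, hck, hcx⟩ := exists_monotone_cuts (s := fun p => m (U p)) (n := P.card)
    (x := fun i => (i : ℝ) / k) hk hε
    (monotone_nat_of_le_succ fun p => by simp only [hUs]; linarith [hnn _ (ht p).1])
    (fun p _ => by simp only [hUs]; linarith [(ht p).2])
    (fun _ _ hij => div_le_div_of_nonneg_right (by exact_mod_cast hij) hkpos.le)
    (by simp [hU0, hm.map_empty]) (by simp [hUn, hone, hkpos.ne'])
  exact ⟨U ∘ c, hU.comp hc, fun i => hUc (c i), by simp [hU0, hc0], by simp [hUn, hck], hcx⟩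

end Additive

/-- If `m` is a non-atomic finitely additive probability measure on the
Boolean algebra of clopen subsets of `2^ω`, then for every `k ≥ 1` and `ε > 0` there is a
partition of `2^ω` into clopen sets `S 1, …, S k` with `|m (S i) - 1/k| < ε` for all `i`. -/
theorem clopen_partition_of_nonatomic_finitely_additive
    (m : Set (ℕ → Bool) → ℝ)
    (hnn : ∀ s : Set (ℕ → Bool), IsClopen s → 0 ≤ m s)
    (hone : m Set.univ = 1)
    (hadd : ∀ s t : Set (ℕ → Bool), IsClopen s → IsClopen t → Disjoint s t →
      m (s ∪ t) = m s + m t)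
    (hna : ∀ ε : ℝ, 0 < ε → ∃ P : Finset (Set (ℕ → Bool)),
      (↑P : Set (Set (ℕ → Bool))).PairwiseDisjoint id ∧
      (∀ s ∈ P, IsClopen s ∧ m s < ε) ∧ ⋃₀ (P : Set (Set (ℕ → Bool))) = Set.univ)
    (k : ℕ) (hk : 1 ≤ k) (ε : ℝ) (hε : 0 < ε) :
    ∃ S : Fin k → Set (ℕ → Bool), (∀ i, IsClopen (S i)) ∧
      Pairwise (Function.onFun Disjoint S) ∧ (⋃ i, S i) = Set.univ ∧
      ∀ i, |m (S i) - 1 / k| < ε := by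
  have hm : IsAdditiveOnClopens m := hadd
  obtain ⟨P, hPd, hPm, hPU⟩ := hna ε hε
  obtain ⟨V, hV, hVc, hV0, hVk, hVm⟩ := hm.exists_clopen_chain hnn hone hε hPd hPm hPU hk
  refine ⟨fun i => V (i + 1) \ V i, fun i => (hVc _).diff (hVc _),
    hV.pairwise_disjoint_diff_succ k, iUnion_diff_succ_eq_univ hV0 hVk, fun i => ?_⟩
  obtain ⟨hlo, hhi⟩ := hVm i i.is_lt.le
  obtain ⟨hlo', hhi'⟩ := hVm (i + 1) i.is_lt
  simp only [Nat.cast_add, Nat.cast_one, add_div] at hlo' hhi'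
  rw [hm.map_diff (hVc _) (hVc _) (hV (Nat.le_succ i)), abs_lt]
  constructor <;> linarith
end

section
/- For every non-atomic Radon measure μ on the Cantor space 2^ω there exists a continuous surjection f : 2^ω → 2^ω such that for every closed set S ⊆ 2^ω with λ(S) = 0 one has μ(f⁻¹(S)) = 0, where λ is the standard product (coin-flipping/Haar) measure on 2^ω. -/
open MeasureTheory Topology ENNReal NNReal

/-- The basic clopen cylinder `[v] ⊆ 2^ω` determined by a finite 0-1 sequence `v`. -/
def Cyl (v : List Bool) : Set (ℕ → Bool) := {x | ∀ i : Fin v.length, x i.val = v.get i}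

/-!
Non-atomicity makes deep cylinders `μ`-small, so every nonempty clopen set can be cut into two
nonempty clopen parts, each of measure at most half of it plus an arbitrarily small error.
Cutting recursively gives a binary tree of clopen sets whose level-`n` sets have measure at most
`2 · 2⁻ⁿ`; sending a point to its branch in the tree is a continuous surjection `f` with
`μ (f⁻¹ [v]) ≤ 2 λ [v]`. A closed `λ`-null set is the decreasing intersection of finite unions
of cylinders whose `λ`-measure tends to `0`, so its preimage is `μ`-null.
-/

open PiNat Set Filter

section Combinatorics

variable {ι : Type*}

theorem Finset.exists_subset_sum_le_and_lt_add {M : Type*} [AddCommMonoid M] [LinearOrder M]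
    [IsOrderedAddMonoid M] (s : Finset ι) (w : ι → M) {c ε : M} (hc : 0 ≤ c)
    (hw : ∀ i ∈ s, w i ≤ ε) :
    ∃ t ⊆ s, ∑ i ∈ t, w i ≤ c ∧ (t = s ∨ c < ∑ i ∈ t, w i + ε) := by
  classical
  induction s using Finset.induction_on with
  | empty => exact ⟨∅, subset_rfl, by simpa using hc, Or.inl rfl⟩
  | insert a s has ih =>
    obtain ⟨t, hts, hle, rfl | hlt⟩ := ih fun i hi => hw i (Finset.mem_insert_of_mem hi)
    · by_cases hadd : ∑ i ∈ t, w i + w a ≤ c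
      · refine ⟨insert a t, subset_rfl, ?_, Or.inl rfl⟩
        rwa [Finset.sum_insert has, add_comm]
      · refine ⟨t, Finset.subset_insert a t, hle, Or.inr ?_⟩
        exact (not_le.1 hadd).trans_le (add_le_add le_rfl (hw a (Finset.mem_insert_self a t)))
    · exact ⟨t, hts.trans (Finset.subset_insert a s), hle, Or.inr hlt⟩

open Finset in
/-- Put one fixed element on the first side and fill that side greedily up to half the total. -/
theorem Finset.exists_balanced_bipartition [DecidableEq ι] (s : Finset ι) (w : ι → ℝ≥0∞)
    {ε : ℝ≥0∞} (hfin : ∑ i ∈ s, w i ≠ ∞) (hw : ∀ i ∈ s, w i ≤ ε) (hs : 1 < #s) :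
    ∃ t ⊆ s, t.Nonempty ∧ (s \ t).Nonempty ∧
      ∑ i ∈ t, w i ≤ (∑ i ∈ s, w i) / 2 + ε ∧ ∑ i ∈ s \ t, w i ≤ (∑ i ∈ s, w i) / 2 + ε := by
  set T := ∑ i ∈ s, w i
  obtain ⟨a, ha⟩ := card_pos.1 (zero_lt_one.trans hs)
  have hsum_erase : ∑ i ∈ s.erase a, w i + w a = T := sum_erase_add s w ha
  obtain ⟨t, hts, hle, hcases⟩ := (s.erase a).exists_subset_sum_le_and_lt_add w (c := T / 2)
    zero_le fun i hi => hw i (mem_of_mem_erase hi)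
  by_cases hfull : t = s.erase a
  · subst hfull
    refine ⟨{a}, singleton_subset_iff.2 ha, singleton_nonempty a, ?_, ?_, ?_⟩
    · rw [sdiff_singleton_eq_erase, ← card_pos, card_erase_of_mem ha]
      omega
    · rw [sum_singleton]
      exact (hw a ha).trans le_add_self
    · rw [sdiff_singleton_eq_erase]
      exact hle.trans le_self_add
  · have hlt : T / 2 < ∑ i ∈ t, w i + ε := hcases.resolve_left hfull
    have hat : a ∉ t := fun h => notMem_erase a s (hts h)
    have hdiff : s \ insert a t = s.erase a \ t := by
      rw [sdiff_insert, erase_sdiff_comm]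
    refine ⟨insert a t, insert_subset ha (hts.trans (erase_subset a s)), insert_nonempty a t,
      ?_, ?_, ?_⟩
    · rw [hdiff, sdiff_nonempty]
      exact fun h => hfull (h.antisymm' hts)
    · rw [sum_insert hat, add_comm]
      exact add_le_add hle (hw a ha)
    · have hsplit : ∑ i ∈ s.erase a \ t, w i + ∑ i ∈ t, w i + w a = T := by
        rw [sum_sdiff hts, hsum_erase]
      have hhalf : T / 2 ≠ ∞ := ENNReal.div_ne_top hfin two_ne_zero
      rw [hdiff, ← ENNReal.add_le_add_iff_right hhalf]
      calc ∑ i ∈ s.erase a \ t, w i + T / 2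
          ≤ ∑ i ∈ s.erase a \ t, w i + (∑ i ∈ t, w i + ε) := add_le_add le_rfl hlt.le
        _ ≤ T + ε := by rw [← hsplit, ← add_assoc]; exact add_le_add le_self_add le_rfl
        _ = T / 2 + ε + T / 2 := by rw [add_right_comm, ENNReal.add_halves]

end Combinatorics

section BalancedSplit

variable {X : Type*} [TopologicalSpace X] [MeasurableSpace X]

structure IsBalancedSplit (μ : Measure X) (ε : ℝ≥0∞) (B C : Set X) : Prop where
  subset : C ⊆ B
  isClopen : IsClopen C
  nonempty : C.Nonempty
  diff_nonempty : (B \ C).Nonempty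
  measure_le : μ C ≤ μ B / 2 + ε
  measure_diff_le : μ (B \ C) ≤ μ B / 2 + ε

/-- The pieces `B ∩ g ⁻¹' {v}` are distributed between the two halves. -/
theorem exists_isBalancedSplit_of_fibers [OpensMeasurableSpace X] {F : Type*} [Fintype F]
    [TopologicalSpace F] [DiscreteTopology F] (μ : Measure X) [IsFiniteMeasure μ] {g : X → F}
    (hg : Continuous g) {ε : ℝ≥0∞} (hε : ∀ x, μ (g ⁻¹' {g x}) ≤ ε) {B : Set X}
    (hB : IsClopen B) {x y : X} (hx : x ∈ B) (hy : y ∈ B) (hxy : g x ≠ g y) :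
    ∃ C, IsBalancedSplit μ ε B C := by
  classical
  set s : Finset F := Finset.univ.filter (· ∈ g '' B)
  set w : F → ℝ≥0∞ := fun v => μ.restrict B (g ⁻¹' {v})
  have hpiece : ∀ t : Finset F, μ (B ∩ g ⁻¹' t) = ∑ v ∈ t, w v := fun t => by
    rw [sum_measure_preimage_singleton t fun v _ =>
        ((isOpen_discrete {v}).preimage hg).measurableSet,
      Measure.restrict_apply ((isOpen_discrete _).preimage hg).measurableSet, inter_comm]
  have hmem_s : ∀ {z}, z ∈ B → g z ∈ s := fun hz => by simpa [s] using ⟨_, hz, rfl⟩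
  have hB_eq : B ∩ g ⁻¹' s = B := inter_eq_left.2 fun z hz => hmem_s hz
  have hμB : μ B = ∑ v ∈ s, w v := by rw [← hpiece, hB_eq]
  have hw : ∀ v ∈ s, w v ≤ ε := fun v hv => by
    obtain ⟨z, -, rfl⟩ : v ∈ g '' B := by simpa [s] using hv
    exact Measure.restrict_le_self _ |>.trans (hε z)
  have hcard : 1 < s.card := Finset.one_lt_card.2 ⟨_, hmem_s hx, _, hmem_s hy, hxy⟩
  obtain ⟨t, hts, ⟨v, hv⟩, ⟨v', hv'⟩, ht, hst⟩ :=
    s.exists_balanced_bipartition w (hμB ▸ measure_ne_top μ B) hw hcard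
  have hdiff : B \ (B ∩ g ⁻¹' t) = B ∩ g ⁻¹' ↑(s \ t) := by
    ext z
    simp only [Set.mem_sdiff, mem_inter_iff, mem_preimage, Finset.coe_sdiff]
    exact ⟨fun h => ⟨h.1, hmem_s h.1, fun h' => h.2 ⟨h.1, h'⟩⟩,
      fun h => ⟨h.1, fun h' => h.2.2 h'.2⟩⟩
  rw [← hμB] at ht hst
  refine ⟨B ∩ g ⁻¹' t, inter_subset_left, hB.inter ((isClopen_discrete _).preimage hg), ?_, ?_,
    by rwa [hpiece], by rwa [hdiff, hpiece]⟩
  · obtain ⟨z, hz, rfl⟩ : v ∈ g '' B := by simpa [s] using hts hv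
    exact ⟨z, hz, hv⟩
  · rw [hdiff]
    obtain ⟨z, hz, rfl⟩ : v' ∈ g '' B := by simpa [s] using (Finset.mem_sdiff.1 hv').1
    exact ⟨z, hz, hv'⟩

end BalancedSplit

section Cylinders

def prefixFin (n : ℕ) (x : ℕ → Bool) : Fin n → Bool := fun i => x i

theorem continuous_prefixFin (n : ℕ) : Continuous (prefixFin n) :=
  continuous_pi fun i => continuous_apply (i : ℕ)

theorem mem_cylinder_iff_prefixFin_eq {x y : ℕ → Bool} {n : ℕ} :
    y ∈ cylinder x n ↔ prefixFin n y = prefixFin n x :=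
  ⟨fun h => funext fun i => h i i.isLt, fun h i hi => congrFun h ⟨i, hi⟩⟩

theorem preimage_prefixFin_self (x : ℕ → Bool) (n : ℕ) :
    prefixFin n ⁻¹' {prefixFin n x} = cylinder x n :=
  ext fun _ => mem_cylinder_iff_prefixFin_eq.symm

theorem cylinder_eq_cyl (x : ℕ → Bool) (n : ℕ) :
    cylinder x n = Cyl (List.ofFn (prefixFin n x)) := by
  ext y
  simp only [mem_cylinder_iff, Cyl, mem_ofPred_eq, List.get_eq_getElem, List.getElem_ofFn,
    prefixFin]
  exact ⟨fun h i => h i (by simpa using i.isLt), fun h i hi => h ⟨i, by simpa using hi⟩⟩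

theorem iInter_cylinder_eq_singleton {E : ℕ → Type*} (x : ∀ n, E n) :
    ⋂ n, cylinder x n = {x} := by
  refine (eq_singleton_iff_unique_mem.2 ⟨mem_iInter.2 (self_mem_cylinder x), fun y hy => ?_⟩)
  exact funext fun i => mem_iInter.1 hy (i + 1) i i.lt_succ_self

theorem exists_forall_measure_cylinder_lt (μ : Measure (ℕ → Bool)) [IsFiniteMeasure μ]
    [NullSingletonClass μ] {ε : ℝ≥0∞} (hε : 0 < ε) : ∃ N, ∀ x, μ (cylinder x N) < ε := by
  set U : ℕ → Set (ℕ → Bool) := fun n => {x | μ (cylinder x n) < ε}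
  have hU_open : ∀ n, IsOpen (U n) := fun n => isOpen_iff_forall_mem_open.2 fun x hx =>
    ⟨cylinder x n, fun y hy => show μ _ < ε by rwa [mem_cylinder_iff_eq.1 hy],
      isOpen_cylinder _ x n, self_mem_cylinder x n⟩
  have hU_mono : Monotone U := fun m n hmn x hx =>
    (measure_mono (cylinder_anti x hmn)).trans_lt hx
  have hU_cover : univ ⊆ ⋃ n, U n := fun x _ => by
    have h := tendsto_measure_iInter_atTop (μ := μ)
      (fun n => (isOpen_cylinder _ x n).measurableSet.nullMeasurableSet)
      (fun _ _ => cylinder_anti x) ⟨0, measure_ne_top μ _⟩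
    rw [iInter_cylinder_eq_singleton, measure_singleton] at h
    exact mem_iUnion.2 (h.eventually_lt_const hε).exists
  obtain ⟨N, hN⟩ := isCompact_univ.elim_directed_cover U hU_open hU_cover hU_mono.directed_le
  exact ⟨N, fun x => hN (mem_univ x)⟩

theorem exists_isBalancedSplit (μ : Measure (ℕ → Bool)) [IsFiniteMeasure μ]
    [NullSingletonClass μ] {B : Set (ℕ → Bool)} (hB : IsClopen B) (hne : B.Nonempty)
    {ε : ℝ≥0∞} (hε : 0 < ε) : ∃ C, IsBalancedSplit μ ε B C := by
  obtain ⟨N₀, hN₀⟩ := exists_forall_measure_cylinder_lt μ hε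
  obtain ⟨x, hx⟩ := hne
  obtain ⟨n, hn⟩ := exists_disjoint_cylinder hB.isOpen.isClosed_compl fun h => h hx
  have hxn : cylinder x n ⊆ B := fun y hy => not_not.1 fun h => hn.ne_of_mem h hy rfl
  set N := max N₀ (n + 1)
  have hsmall : ∀ z, μ (prefixFin N ⁻¹' {prefixFin N z}) ≤ ε := fun z => by
    rw [preimage_prefixFin_self]
    exact ((measure_mono (cylinder_anti z (le_max_left N₀ (n + 1)))).trans_lt (hN₀ z)).le
  refine exists_isBalancedSplit_of_fibers μ (continuous_prefixFin N) hsmall hB hx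
    (hxn (update_mem_cylinder x n !(x n))) fun h => ?_
  have := congrFun h ⟨n, lt_max_of_lt_right n.lt_succ_self⟩
  simp [prefixFin] at this

end Cylinders

/-- `set (b :: w)` is the child `b` of `set w`: words grow at the head, as in `PiNat.res`, so the
branch of `y` through the tree is `fun n => set (res y n)`. -/
structure BinaryClopenScheme (X : Type*) [TopologicalSpace X] where
  set : List Bool → Set X
  isClopen : ∀ w, IsClopen (set w)
  nonempty : ∀ w, (set w).Nonempty
  set_nil : set [] = univ
  union_cons : ∀ w, set (false :: w) ∪ set (true :: w) = set w
  disjoint_cons : ∀ w, Disjoint (set (false :: w)) (set (true :: w))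

namespace BinaryClopenScheme

variable {X : Type*} [TopologicalSpace X] (A : BinaryClopenScheme X)

theorem cons_subset (b : Bool) (w : List Bool) : A.set (b :: w) ⊆ A.set w := by
  rw [← A.union_cons w]
  cases b
  · exact subset_union_left
  · exact subset_union_right

theorem disjoint_cons_of_ne {b b' : Bool} (hb : b ≠ b') (w : List Bool) :
    Disjoint (A.set (b :: w)) (A.set (b' :: w)) := by
  cases b <;> cases b' <;> simp only [ne_eq, not_true_eq_false] at hb
  · exact A.disjoint_cons w
  · exact (A.disjoint_cons w).symm

theorem mem_cons_false_iff {x : X} {w : List Bool} (hx : x ∈ A.set w) :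
    x ∈ A.set (false :: w) ↔ x ∉ A.set (true :: w) := by
  refine ⟨fun h h' => (A.disjoint_cons w).ne_of_mem h h' rfl, fun h => ?_⟩
  rw [← A.union_cons w] at hx
  exact hx.resolve_right h

theorem eq_of_mem_of_mem {x : X} {w w' : List Bool} (hw : x ∈ A.set w) (hw' : x ∈ A.set w')
    (hlen : w.length = w'.length) : w = w' := by
  induction w generalizing w' with
  | nil => exact (List.length_eq_zero_iff.1 hlen.symm).symm
  | cons b w ih =>
    obtain _ | ⟨b', w'⟩ := w'
    · simp at hlen
    obtain rfl := ih (A.cons_subset b w hw) (A.cons_subset b' w' hw') (by simpa using hlen)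
    by_contra hne
    exact (A.disjoint_cons_of_ne (fun hb => hne (by rw [hb])) w).ne_of_mem hw hw' rfl

open Classical in
/-- The address of `x`: its `n`-th bit records which child of its level-`n` set contains `x`. -/
noncomputable def code (x : X) (n : ℕ) : Bool :=
  decide (∃ w : List Bool, w.length = n ∧ x ∈ A.set (true :: w))

theorem code_length_eq_iff {x : X} {w : List Bool} (hx : x ∈ A.set w) (b : Bool) :
    A.code x w.length = b ↔ x ∈ A.set (b :: w) := by
  have htrue : A.code x w.length = true ↔ x ∈ A.set (true :: w) := by
    simp only [code, decide_eq_true_iff]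
    exact ⟨fun ⟨w', hlen, hw'⟩ =>
      A.eq_of_mem_of_mem (A.cons_subset _ _ hw') hx hlen ▸ hw', fun h => ⟨w, rfl, h⟩⟩
  cases b
  · rw [A.mem_cons_false_iff hx, ← htrue, Bool.not_eq_true]
  · exact htrue

theorem preimage_code_cylinder (y : ℕ → Bool) (n : ℕ) :
    A.code ⁻¹' cylinder y n = A.set (res y n) := by
  induction n with
  | zero => rw [cylinder_zero, res_zero, A.set_nil, preimage_univ]
  | succ n ih =>
    ext x
    have hmem : x ∈ A.set (res y n) ↔ ∀ i < n, A.code x i = y i := by rw [← ih]; rfl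
    have hbit (hx : x ∈ A.set (res y n)) : A.code x n = y n ↔ x ∈ A.set (y n :: res y n) := by
      simpa only [res_length] using A.code_length_eq_iff hx (y n)
    rw [mem_preimage, mem_cylinder_iff, res_succ]
    constructor
    · intro h
      exact (hbit (hmem.2 fun i hi => h i (Nat.lt_succ_of_lt hi))).1 (h n n.lt_succ_self)
    · intro h i hi
      have hx : x ∈ A.set (res y n) := A.cons_subset _ _ h
      obtain hi | rfl := Nat.lt_succ_iff_lt_or_eq.1 hi
      · exact hmem.1 hx i hi
      · exact (hbit hx).2 h

theorem continuous_code : Continuous A.code := by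
  refine (isTopologicalBasis_cylinders fun _ => Bool).continuous_iff.2 ?_
  rintro _ ⟨y, n, rfl⟩
  rw [A.preimage_code_cylinder]
  exact (A.isClopen _).isOpen

theorem surjective_code [CompactSpace X] : Function.Surjective A.code := by
  intro y
  obtain ⟨x, hx⟩ := IsCompact.nonempty_iInter_of_sequence_nonempty_isCompact_isClosed
    (fun n => A.set (res y n)) (fun n => A.cons_subset _ _) (fun n => A.nonempty _)
    (A.isClopen _).isClosed.isCompact (fun n => (A.isClopen _).isClosed)
  have hy : x ∈ A.code ⁻¹' ⋂ n, cylinder y n := by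
    simpa only [← A.preimage_code_cylinder, ← preimage_iInter] using hx
  rw [iInter_cylinder_eq_singleton] at hy
  exact ⟨x, hy⟩

end BinaryClopenScheme

section BalancedScheme

variable {X : Type*} [TopologicalSpace X] [MeasurableSpace X]

noncomputable def halfSplit (μ : Measure X) (ε : ℝ≥0∞) (B : Set X) : Set X :=
  Classical.epsilon (IsBalancedSplit μ ε B)

theorem isBalancedSplit_halfSplit {μ : Measure X} {ε : ℝ≥0∞} {B : Set X}
    (h : ∃ C, IsBalancedSplit μ ε B C) : IsBalancedSplit μ ε B (halfSplit μ ε B) :=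
  Classical.epsilon_spec h

/-- The error `2⁻¹ ^ (2n + 2)` allowed at depth `n` is chosen so that this invariant persists. -/
theorem add_inv_two_pow_le_of_le_half_add {a b : ℝ≥0∞} {n : ℕ}
    (hb : b + 2⁻¹ ^ (2 * n) ≤ 2 * 2⁻¹ ^ n) (ha : a ≤ b / 2 + 2⁻¹ ^ (2 * n + 2)) :
    a + 2⁻¹ ^ (2 * (n + 1)) ≤ 2 * 2⁻¹ ^ (n + 1) :=
  calc a + 2⁻¹ ^ (2 * (n + 1)) ≤ b / 2 + 2⁻¹ ^ (2 * n + 2) + 2⁻¹ ^ (2 * n + 2) :=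
        add_le_add ha le_rfl
    _ = 2⁻¹ * (b + 2⁻¹ ^ (2 * n)) := by
        rw [add_assoc, ← two_mul, ENNReal.div_eq_inv_mul, pow_succ, ← mul_assoc, mul_comm 2,
          pow_succ, mul_assoc _ 2⁻¹, ENNReal.inv_mul_cancel two_ne_zero ENNReal.ofNat_ne_top]
        ring
    _ ≤ 2⁻¹ * (2 * 2⁻¹ ^ n) := by gcongr
    _ = 2 * 2⁻¹ ^ (n + 1) := by ring

variable (μ : Measure (ℕ → Bool))

noncomputable def balancedScheme : List Bool → Set (ℕ → Bool)
  | [] => univ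
  | true :: w => halfSplit μ (2⁻¹ ^ (2 * w.length + 2)) (balancedScheme w)
  | false :: w => balancedScheme w \ halfSplit μ (2⁻¹ ^ (2 * w.length + 2)) (balancedScheme w)

variable [IsProbabilityMeasure μ] [NullSingletonClass μ]

theorem balancedScheme_spec (w : List Bool) :
    IsClopen (balancedScheme μ w) ∧ (balancedScheme μ w).Nonempty ∧
      μ (balancedScheme μ w) + 2⁻¹ ^ (2 * w.length) ≤ 2 * 2⁻¹ ^ w.length := by
  induction w with
  | nil => exact ⟨isClopen_univ, univ_nonempty, by simp [balancedScheme, one_add_one_eq_two]⟩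
  | cons b w ih =>
    obtain ⟨hclopen, hne, hμ⟩ := ih
    have h := isBalancedSplit_halfSplit <| exists_isBalancedSplit μ hclopen hne
      (ε := 2⁻¹ ^ (2 * w.length + 2)) (ENNReal.pow_pos (by simp) _)
    cases b
    · exact ⟨hclopen.diff h.isClopen, h.diff_nonempty,
        add_inv_two_pow_le_of_le_half_add hμ h.measure_diff_le⟩
    · exact ⟨h.isClopen, h.nonempty, add_inv_two_pow_le_of_le_half_add hμ h.measure_le⟩

theorem halfSplit_balancedScheme_subset (w : List Bool) :
    halfSplit μ (2⁻¹ ^ (2 * w.length + 2)) (balancedScheme μ w) ⊆ balancedScheme μ w :=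
  (isBalancedSplit_halfSplit (exists_isBalancedSplit μ (balancedScheme_spec μ w).1
    (balancedScheme_spec μ w).2.1 (ENNReal.pow_pos (by simp) _))).subset

noncomputable def balancedClopenScheme : BinaryClopenScheme (ℕ → Bool) where
  set := balancedScheme μ
  isClopen w := (balancedScheme_spec μ w).1
  nonempty w := (balancedScheme_spec μ w).2.1
  set_nil := rfl
  union_cons w := sdiff_union_of_subset (halfSplit_balancedScheme_subset μ w)
  disjoint_cons _ := disjoint_sdiff_left

theorem measure_preimage_code_cylinder_le (y : ℕ → Bool) (n : ℕ) :
    μ ((balancedClopenScheme μ).code ⁻¹' cylinder y n) ≤ 2 * 2⁻¹ ^ n := by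
  rw [BinaryClopenScheme.preimage_code_cylinder]
  have h := (balancedScheme_spec μ (res y n)).2.2
  rw [res_length] at h
  exact le_self_add.trans h

end BalancedScheme

section Domination

variable {X : Type*} [MeasurableSpace X] {μ : Measure X} {lam : Measure (ℕ → Bool)}
  {f : X → ℕ → Bool} {c : ℝ≥0∞}

theorem measure_preimage_biUnion_cylinder_le
    (hlam : ∀ (x : ℕ → Bool) n, lam (cylinder x n) = 2⁻¹ ^ n)
    (hf : ∀ (x : ℕ → Bool) n, μ (f ⁻¹' cylinder x n) ≤ c * 2⁻¹ ^ n) (S : Set (ℕ → Bool))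
    (n : ℕ) :
    μ (f ⁻¹' ⋃ x ∈ S, cylinder x n) ≤ c * lam (⋃ x ∈ S, cylinder x n) := by
  classical
  set T : Finset (Fin n → Bool) := Finset.univ.filter (· ∈ prefixFin n '' S)
  have hT : ⋃ x ∈ S, cylinder x n = prefixFin n ⁻¹' T := by
    ext y
    simp only [T, Finset.coe_filter, Finset.mem_univ, true_and, mem_preimage, mem_iUnion₂,
      exists_prop, mem_ofPred_eq, mem_image]
    exact exists_congr fun x => and_congr_right fun _ =>
      mem_cylinder_iff_prefixFin_eq.trans eq_comm
  have hfiber : ∀ v ∈ T, μ (f ⁻¹' (prefixFin n ⁻¹' {v})) ≤ c * lam (prefixFin n ⁻¹' {v}) := by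
    intro v hv
    obtain ⟨x, -, rfl⟩ : v ∈ prefixFin n '' S := by simpa [T] using hv
    rw [preimage_prefixFin_self, hlam]
    exact hf x n
  rw [hT, ← Finset.set_biUnion_preimage_singleton, preimage_iUnion₂,
    Finset.set_biUnion_preimage_singleton, ← sum_measure_preimage_singleton T fun v _ =>
      ((isOpen_discrete {v}).preimage (continuous_prefixFin n)).measurableSet, Finset.mul_sum]
  exact (measure_biUnion_finset_le T _).trans (Finset.sum_le_sum hfiber)

/-- `S` is the decreasing intersection of the finite unions of cylinders `V n` meeting it. -/
theorem measure_preimage_le_mul_of_isClosed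
    (hlam : ∀ (x : ℕ → Bool) n, lam (cylinder x n) = 2⁻¹ ^ n) (hc : c ≠ ∞)
    (hf : ∀ (x : ℕ → Bool) n, μ (f ⁻¹' cylinder x n) ≤ c * 2⁻¹ ^ n) {S : Set (ℕ → Bool)}
    (hS : IsClosed S) : μ (f ⁻¹' S) ≤ c * lam S := by
  have : IsFiniteMeasure lam := ⟨by rw [← cylinder_zero (fun _ : ℕ => false), hlam]; simp⟩
  set V : ℕ → Set (ℕ → Bool) := fun n => ⋃ x ∈ S, cylinder x n
  have hSV : ∀ n, S ⊆ V n := fun n y hy => mem_biUnion hy (self_mem_cylinder y n)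
  have hV_anti : Antitone V := fun m n hmn =>
    iUnion₂_mono fun x _ => cylinder_anti x hmn
  have hV_inter : ⋂ n, V n = S := by
    refine Subset.antisymm (fun y hy => ?_) (subset_iInter hSV)
    by_contra hyS
    obtain ⟨n, hn⟩ := exists_disjoint_cylinder hS hyS
    obtain ⟨x, hxS, hyx⟩ := mem_iUnion₂.1 (mem_iInter.1 hy n)
    exact hn.ne_of_mem hxS ((mem_cylinder_comm x y n).1 hyx) rfl
  have hV_tendsto : Tendsto (fun n => lam (V n)) atTop (𝓝 (lam S)) := by
    have h := tendsto_measure_iInter_atTop (μ := lam)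
      (fun n => (isOpen_biUnion fun x _ => isOpen_cylinder _ x n).measurableSet.nullMeasurableSet)
      hV_anti ⟨0, measure_ne_top lam _⟩
    rwa [hV_inter] at h
  refine ge_of_tendsto' (ENNReal.Tendsto.const_mul hV_tendsto (Or.inr hc)) fun n => ?_
  exact (measure_mono (preimage_mono (hSV n))).trans
    (measure_preimage_biUnion_cylinder_le hlam hf S n)

end Domination

/-- For every non-atomic Radon measure `μ` on the Cantor space `2^ω` there
is a continuous surjection `f : 2^ω → 2^ω` such that `μ (f⁻¹ S) = 0` for every closed
`λ`-null set `S`, where `λ` is the standard coin-flipping measure on `2^ω` (the unique Borel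
measure giving each basic clopen `[v]`, `v ∈ 2^n`, measure `2⁻ⁿ`). -/
theorem exists_continuous_surjection_pulling_null_to_null
    (lam : Measure (ℕ → Bool))
    (hlam : ∀ v : List Bool, lam (Cyl v) = (1 / 2 : ℝ≥0∞) ^ v.length)
    (μ : Measure (ℕ → Bool)) (hμ : IsRadon μ) (hna : ∀ y : ℕ → Bool, μ {y} = 0) :
    ∃ f : (ℕ → Bool) → (ℕ → Bool), Continuous f ∧ Function.Surjective f ∧
      ∀ S : Set (ℕ → Bool), IsClosed S → lam S = 0 → μ (f ⁻¹' S) = 0 := by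
  have : IsProbabilityMeasure μ := hμ.1
  have : NullSingletonClass μ := ⟨hna⟩
  have hlam' : ∀ (x : ℕ → Bool) n, lam (cylinder x n) = 2⁻¹ ^ n := fun x n => by
    rw [cylinder_eq_cyl, hlam, List.length_ofFn, one_div]
  refine ⟨(balancedClopenScheme μ).code, (balancedClopenScheme μ).continuous_code,
    (balancedClopenScheme μ).surjective_code, fun S hS hlamS => ?_⟩
  have h := measure_preimage_le_mul_of_isClosed hlam' ENNReal.ofNat_ne_top
    (measure_preimage_code_cylinder_le μ) hS
  rwa [hlamS, mul_zero, nonpos_iff_eq_zero] at h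
end

section
/- For every non-atomic Radon measure μ on βω there is a full tree 𝒯 of subsets of ω such that for every U ⊆ ω, if T_U is Lebesgue-null in 2^ω then μ([U]) = 0, where [U] is the clopen subset of βω determined by U. Consequently, every ultrafilter on ω that 𝒩-diagonalizes full trees is a μ-point of βω: it avoids all non-atomic Radon measures on βω. -/
open MeasureTheory Topology ENNReal NNReal

/-- `T` is a *tree of subsets of `ω`*: a family indexed by finite 0-1 sequences such that
`T t ⊆* T s` whenever `t` end-extends `s`, and each level `{T s : s ∈ 2^k}` consists of
pairwise almost disjoint sets whose union is almost all of `ω`. -/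
def IsTreeOfSubsets (T : List Bool → Set ℕ) : Prop :=
  (∀ s t : List Bool, s <+: t → (T t \ T s).Finite) ∧
  (∀ k : ℕ, ((⋃ s ∈ {l : List Bool | l.length = k}, T s)ᶜ : Set ℕ).Finite) ∧
  (∀ s t : List Bool, s.length = t.length → s ≠ t → (T s ∩ T t).Finite)

/-- A tree of subsets of `ω` is *full* if all its members are infinite. -/
def IsFullTree (T : List Bool → Set ℕ) : Prop := ∀ s : List Bool, (T s).Infinite

/-- For a tree `T` of subsets of `ω` and `X ⊆ ω`, the set
`T_X = {x ∈ 2^ω : T (x↾k) ∩ X is infinite for all k}`. -/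
def TreeLimit (T : List Bool → Set ℕ) (X : Set ℕ) : Set (ℕ → Bool) :=
  {x | ∀ k : ℕ, (T (List.ofFn fun i : Fin k => x i.val) ∩ X).Infinite}

/-- `βω`, the Stone–Čech compactification of the discrete space `ω`, identified with the Stone
space of all ultrafilters on `ℕ`, equipped with its Borel σ-algebra. -/
instance : MeasurableSpace (Ultrafilter ℕ) := borel (Ultrafilter ℕ)
instance : BorelSpace (Ultrafilter ℕ) := ⟨rfl⟩

/-! For a finite, outer regular measure `μ` on `βα` without atoms, every point has clopen
neighbourhoods `[B] = basicClopen B` of arbitrarily small measure, so by compactness every `[A]`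
is a finite union of clopen sets `[B]`, `B ⊆ A`, of measure `< ε`. Collecting these pieces one
at a time until half the measure of `[A]` would be exceeded splits `A` into two halves of measure
at most `μ [A] / 2 + ε`, and trading a small infinite subset of `A` between them makes both halves
infinite. Splitting recursively, with error `4⁻¹ ^ (k + 1)` at depth `k`, gives a full tree with
`μ [T s] ≤ (μ βα + 1) * 2⁻¹ ^ |s|`.

Given `U`, the nodes of level `k` cover `ω` and each meets `U` in a finite or an infinite set; as
finite sets are `μ`-null, `μ [U]` is bounded by a constant times the Lebesgue measure of the union
`D k` of the cylinders of the nodes meeting `U` infinitely. The sets `D k` decrease to `T_U`, so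
`λ (T_U) = 0` forces `μ [U] = 0`. If moreover `X ∈ 𝒰` has `λ (T_X) = 0`, then `[X]` is a null
open neighbourhood of `𝒰`.
-/

open Set

lemma Set.Infinite.exists_infinite_subset_infinite_sdiff {α : Type*} {E : Set α}
    (hE : E.Infinite) : ∃ D ⊆ E, D.Infinite ∧ (E \ D).Infinite := by
  set e := hE.natEmbedding
  have he : ∀ {a b}, (e a : α) = e b → a = b := fun h => e.injective (Subtype.ext h)
  refine ⟨range fun k => (e (2 * k) : α), range_subset_iff.mpr fun k => (e _).2,
    infinite_range_of_injective fun a b h => by have := he h; omega, ?_⟩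
  refine (infinite_range_of_injective (f := fun k => (e (2 * k + 1) : α))
    fun a b h => by have := he h; omega).mono ?_
  rintro _ ⟨k, rfl⟩
  refine ⟨(e _).2, ?_⟩
  rintro ⟨j, hj⟩
  have := he hj
  omega

section BasicClopen

variable {α : Type*}

def basicClopen (A : Set α) : Set (Ultrafilter α) := {u | A ∈ u}

lemma isOpen_basicClopen (A : Set α) : IsOpen (basicClopen A) := ultrafilter_isOpen_basic A

lemma isCompact_basicClopen (A : Set α) : IsCompact (basicClopen A) :=
  (ultrafilter_isClosed_basic A).isCompact

lemma basicClopen_mono {A B : Set α} (h : A ⊆ B) : basicClopen A ⊆ basicClopen B :=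
  fun _ hu => Filter.mem_of_superset hu h

@[simp] lemma basicClopen_univ : basicClopen (univ : Set α) = univ :=
  eq_univ_of_forall fun _ => Filter.univ_mem

@[simp] lemma basicClopen_empty : basicClopen (∅ : Set α) = ∅ :=
  eq_empty_of_forall_notMem fun u => u.empty_notMem

lemma basicClopen_union (A B : Set α) : basicClopen (A ∪ B) = basicClopen A ∪ basicClopen B :=
  ext fun _ => Ultrafilter.union_mem_iff

lemma basicClopen_sdiff (A B : Set α) : basicClopen (A \ B) = basicClopen A \ basicClopen B :=
  ext fun u => u.sdiff_mem_iff

lemma basicClopen_biUnion {ι : Type*} (I : Finset ι) (A : ι → Set α) :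
    basicClopen (⋃ i ∈ I, A i) = ⋃ i ∈ I, basicClopen (A i) :=
  ext fun _ => (Ultrafilter.finite_biUnion_mem_iff I.finite_toSet).trans (by simp [basicClopen])

lemma basicClopen_subset_image_pure {F : Set α} (hF : F.Finite) :
    basicClopen F ⊆ pure '' F := fun u hu => by
  obtain ⟨a, ha, rfl⟩ := Ultrafilter.eq_pure_of_finite_mem hF hu
  exact mem_image_of_mem _ ha

end BasicClopen

section MeasureOnUltrafilters

variable {α : Type*} [MeasurableSpace (Ultrafilter α)] (μ : Measure (Ultrafilter α))

lemma measure_basicClopen_mono {A B : Set α} (h : A ⊆ B) :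
    μ (basicClopen A) ≤ μ (basicClopen B) :=
  measure_mono (basicClopen_mono h)

lemma measure_basicClopen_union_le (A B : Set α) :
    μ (basicClopen (A ∪ B)) ≤ μ (basicClopen A) + μ (basicClopen B) := by
  rw [basicClopen_union]
  exact measure_union_le _ _

lemma measure_basicClopen_biUnion_le {ι : Type*} (I : Finset ι) (A : ι → Set α) :
    μ (basicClopen (⋃ i ∈ I, A i)) ≤ ∑ i ∈ I, μ (basicClopen (A i)) := by
  rw [basicClopen_biUnion]
  exact measure_biUnion_finset_le I _

lemma exists_subset_sUnion_measure_basicClopen_le (𝒞 : Finset (Set α)) {ε : ℝ≥0∞}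
    (h𝒞 : ∀ C ∈ 𝒞, μ (basicClopen C) ≤ ε) (t : ℝ≥0∞) :
    ∃ B ⊆ ⋃₀ ↑𝒞, μ (basicClopen B) ≤ t ∧ (B = ⋃₀ ↑𝒞 ∨ t ≤ μ (basicClopen B) + ε) := by
  classical
  induction 𝒞 using Finset.induction_on with
  | empty => exact ⟨∅, empty_subset _, by simp, Or.inl (by simp)⟩
  | insert C 𝒞 _ ih =>
    obtain ⟨B, hB𝒞, hBt, rfl | hB⟩ := ih fun C' hC' => h𝒞 C' (Finset.mem_insert_of_mem hC')
    · rw [Finset.coe_insert, sUnion_insert]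
      by_cases hall : μ (basicClopen (C ∪ ⋃₀ ↑𝒞)) ≤ t
      · exact ⟨_, subset_rfl, hall, Or.inl rfl⟩
      · refine ⟨_, subset_union_right, hBt, Or.inr ?_⟩
        calc t ≤ μ (basicClopen (C ∪ ⋃₀ ↑𝒞)) := (not_le.mp hall).le
          _ ≤ μ (basicClopen C) + μ (basicClopen (⋃₀ ↑𝒞)) := measure_basicClopen_union_le μ _ _
          _ ≤ μ (basicClopen (⋃₀ ↑𝒞)) + ε := by
              rw [add_comm]; gcongr; exact h𝒞 C (Finset.mem_insert_self C 𝒞)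
    · exact ⟨B, hB𝒞.trans (sUnion_subset_sUnion (by simp)), hBt, Or.inr hB⟩

section

variable [NullSingletonClass μ]

lemma measure_basicClopen_of_finite {F : Set α} (hF : F.Finite) : μ (basicClopen F) = 0 :=
  measure_mono_null (basicClopen_subset_image_pure hF) ((hF.image pure).measure_zero μ)

lemma measure_basicClopen_le_of_sdiff_finite {A B : Set α} (h : (A \ B).Finite) :
    μ (basicClopen A) ≤ μ (basicClopen B) :=
  calc μ (basicClopen A) ≤ μ (basicClopen (B ∪ A \ B)) :=
        measure_basicClopen_mono μ (sdiff_subset_iff.mp subset_rfl)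
    _ ≤ μ (basicClopen B) := by
        simpa [measure_basicClopen_of_finite μ h] using measure_basicClopen_union_le μ B (A \ B)

variable [μ.OuterRegular]

lemma exists_subset_mem_measure_basicClopen_lt {A : Set α} {u : Ultrafilter α} (hu : A ∈ u)
    {ε : ℝ≥0∞} (hε : 0 < ε) : ∃ B ⊆ A, B ∈ u ∧ μ (basicClopen B) < ε := by
  obtain ⟨V, huV, hV, hVε⟩ :=
    Set.exists_isOpen_lt_of_lt {u} ε ((measure_singleton (μ := μ) u).trans_lt hε)
  obtain ⟨_, ⟨B, rfl⟩, huB, hBV⟩ :=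
    ultrafilterBasis_is_basis.exists_subset_of_mem_open (huV rfl) hV
  exact ⟨B ∩ A, inter_subset_right, Filter.inter_mem huB hu,
    (measure_basicClopen_mono μ inter_subset_left).trans_lt ((measure_mono hBV).trans_lt hVε)⟩

lemma exists_finset_sUnion_eq_measure_basicClopen_lt (A : Set α) {ε : ℝ≥0∞} (hε : 0 < ε) :
    ∃ 𝒞 : Finset (Set α), (∀ C ∈ 𝒞, C ⊆ A ∧ μ (basicClopen C) < ε) ∧ ⋃₀ ↑𝒞 = A := by
  classical
  choose! B hBA huB hBε using fun u (hu : u ∈ basicClopen A) =>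
    exists_subset_mem_measure_basicClopen_lt μ hu hε
  obtain ⟨t, ht, hcover⟩ :=
    (isCompact_basicClopen A).elim_nhds_subcover (fun u => basicClopen (B u)) fun u hu => (isOpen_basicClopen _).mem_nhds (huB u hu)
  refine ⟨t.image B, ?_, subset_antisymm ?_ fun a ha => ?_⟩
  · simp only [Finset.mem_image]
    rintro _ ⟨u, hu, rfl⟩
    exact ⟨hBA u (ht u hu), hBε u (ht u hu)⟩
  · simp only [Finset.coe_image, sUnion_image, iUnion_subset_iff]
    exact fun u hu => hBA u (ht u hu)
  · obtain ⟨u, hu, hau⟩ := mem_iUnion₂.mp (hcover (show pure a ∈ basicClopen A from ha))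
    exact ⟨B u, Finset.mem_image_of_mem B hu, hau⟩

lemma exists_infinite_subset_measure_basicClopen_lt {A : Set α} (hA : A.Infinite)
    {ε : ℝ≥0∞} (hε : 0 < ε) : ∃ E ⊆ A, E.Infinite ∧ μ (basicClopen E) < ε := by
  obtain ⟨𝒞, h𝒞, h𝒞A⟩ := exists_finset_sUnion_eq_measure_basicClopen_lt μ A hε
  obtain ⟨C, hC, hCinf⟩ : ∃ C ∈ 𝒞, C.Infinite := by
    by_contra! hfin
    exact hA (h𝒞A ▸ 𝒞.finite_toSet.sUnion hfin)
  exact ⟨C, (h𝒞 C hC).1, hCinf, (h𝒞 C hC).2⟩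

end

variable [OpensMeasurableSpace (Ultrafilter α)]

lemma measurableSet_basicClopen (A : Set α) : MeasurableSet (basicClopen A) :=
  (isOpen_basicClopen A).measurableSet

lemma measure_basicClopen_add_sdiff {A B : Set α} (h : B ⊆ A) :
    μ (basicClopen B) + μ (basicClopen (A \ B)) = μ (basicClopen A) := by
  rw [basicClopen_sdiff, measure_add_sdiff (measurableSet_basicClopen B).nullMeasurableSet,
    union_eq_right.mpr (basicClopen_mono h)]

variable [IsFiniteMeasure μ] [NullSingletonClass μ] [μ.OuterRegular]

lemma exists_subset_measure_basicClopen_le_half (A : Set α) {ε : ℝ≥0∞} (hε : 0 < ε) :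
    ∃ B ⊆ A, μ (basicClopen B) ≤ μ (basicClopen A) / 2 ∧
      μ (basicClopen (A \ B)) ≤ μ (basicClopen A) / 2 + ε := by
  obtain ⟨𝒞, h𝒞, rfl⟩ := exists_finset_sUnion_eq_measure_basicClopen_lt μ A hε
  obtain ⟨B, hBA, hB, rfl | hB'⟩ := exists_subset_sUnion_measure_basicClopen_le μ 𝒞
    (fun C hC => (h𝒞 C hC).2.le) (μ (basicClopen (⋃₀ ↑𝒞)) / 2)
  · exact ⟨_, subset_rfl, hB, by simp⟩
  refine ⟨B, hBA, hB, (ENNReal.add_le_add_iff_left (measure_ne_top μ (basicClopen B))).mp ?_⟩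
  calc μ (basicClopen B) + μ (basicClopen (⋃₀ ↑𝒞 \ B)) = μ (basicClopen (⋃₀ ↑𝒞)) :=
        measure_basicClopen_add_sdiff μ hBA
    _ = μ (basicClopen (⋃₀ ↑𝒞)) / 2 + μ (basicClopen (⋃₀ ↑𝒞)) / 2 := (ENNReal.add_halves _).symm
    _ ≤ μ (basicClopen (⋃₀ ↑𝒞)) / 2 + (μ (basicClopen B) + ε) := by gcongr
    _ = μ (basicClopen B) + (μ (basicClopen (⋃₀ ↑𝒞)) / 2 + ε) := by ring

lemma exists_infinite_split_measure_basicClopen_le {A : Set α} (hA : A.Infinite)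
    {ε : ℝ≥0∞} (hε : 0 < ε) :
    ∃ B ⊆ A, B.Infinite ∧ (A \ B).Infinite ∧ μ (basicClopen B) ≤ μ (basicClopen A) / 2 + ε ∧
      μ (basicClopen (A \ B)) ≤ μ (basicClopen A) / 2 + ε := by
  have hε2 : 0 < ε / 2 := ENNReal.half_pos hε.ne'
  obtain ⟨B, hBA, hB, hAB⟩ := exists_subset_measure_basicClopen_le_half μ A hε2
  obtain ⟨E, hEA, hE, hEε⟩ := exists_infinite_subset_measure_basicClopen_lt μ hA hε2
  obtain ⟨D, hDE, hD, hED⟩ := hE.exists_infinite_subset_infinite_sdiff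
  -- Replacing `B ∩ E` by `D` makes both halves infinite and costs at most `μ [E]` on each side.
  refine ⟨B \ E ∪ D, union_subset (sdiff_subset.trans hBA) (hDE.trans hEA),
    hD.mono subset_union_right, hED.mono fun a ha => ?_, ?_, ?_⟩
  · simp only [mem_sdiff, mem_union] at ha ⊢
    exact ⟨hEA ha.1, by tauto⟩
  · calc μ (basicClopen (B \ E ∪ D)) ≤ μ (basicClopen B) + μ (basicClopen E) :=
          (measure_basicClopen_union_le μ _ _).trans (add_le_add
            (measure_basicClopen_mono μ sdiff_subset) (measure_basicClopen_mono μ hDE))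
      _ ≤ μ (basicClopen A) / 2 + ε / 2 + ε / 2 := add_le_add (hB.trans le_self_add) hEε.le
      _ = μ (basicClopen A) / 2 + ε := by rw [add_assoc, ENNReal.add_halves]
  · calc μ (basicClopen (A \ (B \ E ∪ D))) ≤ μ (basicClopen (A \ B ∪ E)) :=
          measure_basicClopen_mono μ fun a => by simp only [mem_sdiff, mem_union]; tauto
      _ ≤ μ (basicClopen A) / 2 + ε / 2 + ε / 2 :=
          (measure_basicClopen_union_le μ _ _).trans (add_le_add hAB hEε.le)
      _ = μ (basicClopen A) / 2 + ε := by rw [add_assoc, ENNReal.add_halves]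

lemma exists_infinite_split_at_depth (A : {A : Set α // A.Infinite}) (k : ℕ) :
    ∃ B ⊆ A.1, B.Infinite ∧ (A.1 \ B).Infinite ∧
      μ (basicClopen B) ≤ μ (basicClopen A) / 2 + 2⁻¹ ^ (2 * k + 2) ∧
      μ (basicClopen (A.1 \ B)) ≤ μ (basicClopen A) / 2 + 2⁻¹ ^ (2 * k + 2) :=
  exists_infinite_split_measure_basicClopen_le μ A.2 (ENNReal.pow_pos (by simp) _)

noncomputable def splitChild (A : {A : Set α // A.Infinite}) (k : ℕ) (b : Bool) :
    {A : Set α // A.Infinite} :=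
  bif b then ⟨A.1 \ (exists_infinite_split_at_depth μ A k).choose,
      (exists_infinite_split_at_depth μ A k).choose_spec.2.2.1⟩
    else ⟨(exists_infinite_split_at_depth μ A k).choose,
      (exists_infinite_split_at_depth μ A k).choose_spec.2.1⟩

lemma splitChild_subset (A : {A : Set α // A.Infinite}) (k : ℕ) (b : Bool) :
    (splitChild μ A k b).1 ⊆ A.1 := by
  cases b
  exacts [(exists_infinite_split_at_depth μ A k).choose_spec.1, sdiff_subset]

lemma splitChild_false_union_true (A : {A : Set α // A.Infinite}) (k : ℕ) :
    (splitChild μ A k false).1 ∪ (splitChild μ A k true).1 = A.1 :=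
  union_sdiff_cancel (exists_infinite_split_at_depth μ A k).choose_spec.1

lemma disjoint_splitChild (A : {A : Set α // A.Infinite}) (k : ℕ) {b b' : Bool} (h : b ≠ b') :
    Disjoint (splitChild μ A k b).1 (splitChild μ A k b').1 := by
  cases b <;> cases b' <;> simp only [ne_eq, not_true_eq_false] at h
  exacts [disjoint_sdiff_right, disjoint_sdiff_left]

lemma measure_splitChild_le (A : {A : Set α // A.Infinite}) (k : ℕ) (b : Bool) :
    μ (basicClopen (splitChild μ A k b).1) ≤ μ (basicClopen A) / 2 + 2⁻¹ ^ (2 * k + 2) := by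
  cases b
  exacts [(exists_infinite_split_at_depth μ A k).choose_spec.2.2.2.1,
    (exists_infinite_split_at_depth μ A k).choose_spec.2.2.2.2]

-- `k` is the depth of the root `A`; it fixes the error allowed in each split.
noncomputable def splitTree : {A : Set α // A.Infinite} → ℕ → List Bool → {A : Set α // A.Infinite}
  | A, _, [] => A
  | A, k, b :: s => splitTree (splitChild μ A k b) (k + 1) s

lemma splitTree_subset (A : {A : Set α // A.Infinite}) (k : ℕ) (s : List Bool) :
    (splitTree μ A k s).1 ⊆ A.1 := by
  induction s generalizing A k with
  | nil => exact subset_rfl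
  | cons b s ih => exact (ih _ _).trans (splitChild_subset μ A k b)

lemma splitTree_append_subset (A : {A : Set α // A.Infinite}) (k : ℕ) (s t : List Bool) :
    (splitTree μ A k (s ++ t)).1 ⊆ (splitTree μ A k s).1 := by
  induction s generalizing A k with
  | nil => exact splitTree_subset μ A k t
  | cons b s ih => exact ih _ _

lemma exists_mem_splitTree (A : {A : Set α // A.Infinite}) (k n : ℕ) {a : α} (ha : a ∈ A.1) :
    ∃ s : List Bool, s.length = n ∧ a ∈ (splitTree μ A k s).1 := by
  induction n generalizing A k with
  | zero => exact ⟨[], rfl, ha⟩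
  | succ n ih =>
    rw [← splitChild_false_union_true μ A k] at ha
    obtain ⟨b, hb⟩ : ∃ b, a ∈ (splitChild μ A k b).1 := ha.elim (⟨false, ·⟩) (⟨true, ·⟩)
    obtain ⟨s, hs, has⟩ := ih _ (k + 1) hb
    exact ⟨b :: s, by simp [hs], has⟩

lemma disjoint_splitTree (A : {A : Set α // A.Infinite}) (k : ℕ) {s t : List Bool}
    (hlen : s.length = t.length) (hne : s ≠ t) :
    Disjoint (splitTree μ A k s).1 (splitTree μ A k t).1 := by
  induction s generalizing A k t with
  | nil => exact absurd (List.length_eq_zero_iff.mp hlen.symm).symm hne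
  | cons b s ih =>
    obtain _ | ⟨b', t⟩ := t
    · simp at hlen
    by_cases hb : b = b'
    · subst hb
      exact ih _ _ (Nat.succ.inj hlen) fun h => hne (h ▸ rfl)
    · exact (disjoint_splitChild μ A k hb).mono (splitTree_subset μ _ _ s)
        (splitTree_subset μ _ _ t)

lemma measure_splitTree_le (A : {A : Set α // A.Infinite}) (k : ℕ) (s : List Bool) :
    μ (basicClopen (splitTree μ A k s).1) + 2⁻¹ ^ (2 * (k + s.length)) ≤
      (μ (basicClopen A) + 2⁻¹ ^ (2 * k)) * 2⁻¹ ^ s.length := by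
  -- The slack `2⁻¹ ^ (2 * depth)` pays for the splitting errors at all greater depths.
  induction s generalizing A k with
  | nil => simp [splitTree]
  | cons b s ih =>
    have hchild : μ (basicClopen (splitChild μ A k b).1) + 2⁻¹ ^ (2 * (k + 1)) ≤
        (μ (basicClopen A) + 2⁻¹ ^ (2 * k)) * 2⁻¹ :=
      calc _ ≤ μ (basicClopen A) / 2 + 2⁻¹ ^ (2 * k + 2) + 2⁻¹ ^ (2 * (k + 1)) :=
            add_le_add_left (measure_splitChild_le μ A k b) _
        _ = (μ (basicClopen A) + 2⁻¹ ^ (2 * k)) * 2⁻¹ := by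
            rw [show 2 * (k + 1) = 2 * k + 1 + 1 by ring, add_assoc, ← two_mul,
              pow_succ _ (2 * k + 1), mul_left_comm,
              ENNReal.mul_inv_cancel two_ne_zero ofNat_ne_top, mul_one, pow_succ,
              div_eq_mul_inv, add_mul]
    calc _ = μ (basicClopen (splitTree μ (splitChild μ A k b) (k + 1) s).1) +
          2⁻¹ ^ (2 * (k + 1 + s.length)) := by simp only [splitTree, List.length_cons]; ring_nf
      _ ≤ (μ (basicClopen (splitChild μ A k b).1) + 2⁻¹ ^ (2 * (k + 1))) * 2⁻¹ ^ s.length :=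
          ih _ _
      _ ≤ (μ (basicClopen A) + 2⁻¹ ^ (2 * k)) * 2⁻¹ * 2⁻¹ ^ s.length := by gcongr
      _ = _ := by rw [List.length_cons, pow_succ', mul_assoc]

end MeasureOnUltrafilters

theorem exists_fullTree_measure_basicClopen_le (μ : Measure (Ultrafilter ℕ)) [IsFiniteMeasure μ]
    [NullSingletonClass μ] [μ.OuterRegular] :
    ∃ T : List Bool → Set ℕ, IsTreeOfSubsets T ∧ IsFullTree T ∧
      ∀ s, μ (basicClopen (T s)) ≤ (μ univ + 1) * 2⁻¹ ^ s.length := by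
  let root : {A : Set ℕ // A.Infinite} := ⟨univ, infinite_univ⟩
  refine ⟨fun s => (splitTree μ root 0 s).1, ⟨?_, fun k => ?_, fun s t hlen hne => ?_⟩,
    fun s => (splitTree μ root 0 s).2, fun s => ?_⟩
  · rintro s _ ⟨t, rfl⟩
    exact finite_empty.subset fun a ha => ha.2 (splitTree_append_subset μ root 0 s t ha.1)
  · refine finite_empty.subset fun a ha => ha ?_
    obtain ⟨s, hs, has⟩ := exists_mem_splitTree μ root 0 k (mem_univ a)
    exact mem_biUnion hs has
  · exact (disjoint_splitTree μ root 0 hlen hne).inter_eq ▸ finite_empty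
  · simpa [root] using le_self_add.trans (measure_splitTree_le μ root 0 s)

def initialWord (x : ℕ → Bool) (k : ℕ) : List Bool := List.ofFn fun i : Fin k => x i

lemma initialWord_length (x : ℕ → Bool) (k : ℕ) : (initialWord x k).length = k :=
  List.length_ofFn

lemma initialWord_succ (x : ℕ → Bool) (k : ℕ) :
    initialWord x (k + 1) = initialWord x k ++ [x k] :=
  List.ofFn_succ_last

lemma mem_cyl_iff {x : ℕ → Bool} {s : List Bool} : x ∈ Cyl s ↔ initialWord x s.length = s := by
  conv_rhs => rhs; rw [← List.ofFn_get s]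
  rw [initialWord, List.ofFn_inj, funext_iff]
  rfl

lemma setOf_initialWord_eq_biUnion (k : ℕ) (P : List Bool → Prop) :
    {x | P (initialWord x k)} = ⋃ s ∈ {s : List Bool | s.length = k ∧ P s}, Cyl s := by
  ext x
  simp only [mem_ofPred_eq, mem_iUnion, exists_prop, mem_cyl_iff]
  constructor
  · exact fun h => ⟨_, ⟨initialWord_length x k, h⟩, by rw [initialWord_length]⟩
  · rintro ⟨s, ⟨rfl, hs⟩, hxs⟩
    rwa [hxs]

lemma measurableSet_cyl (s : List Bool) : MeasurableSet (Cyl s) := by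
  simp only [Cyl, ofPred_forall]
  exact MeasurableSet.iInter fun i => measurableSet_eq_fun (measurable_pi_apply _) measurable_const

lemma pairwiseDisjoint_cyl (k : ℕ) : {s : List Bool | s.length = k}.PairwiseDisjoint Cyl :=
  fun _ hs _ ht hne => disjoint_left.mpr fun _ hxs hxt =>
    hne ((mem_cyl_iff.mp hxs).symm.trans (hs.trans ht.symm ▸ mem_cyl_iff.mp hxt))

lemma IsTreeOfSubsets.finite_sdiff_biUnion {T : List Bool → Set ℕ} (hT : IsTreeOfSubsets T)
    (U : Set ℕ) (k : ℕ) :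
    (U \ ⋃ s ∈ {s : List Bool | s.length = k ∧ (T s ∩ U).Infinite}, T s).Finite := by
  refine ((hT.2.1 k).union (((List.finite_length_eq Bool k).subset
    fun s (hs : s.length = k ∧ (T s ∩ U).Finite) => hs.1).biUnion fun s hs => hs.2)).subset ?_
  rintro a ⟨haU, ha⟩
  by_cases hcov : a ∈ ⋃ s ∈ {l : List Bool | l.length = k}, T s
  · obtain ⟨s, hs, has⟩ := mem_iUnion₂.mp hcov
    refine Or.inr (mem_biUnion ⟨hs, not_infinite.mp fun hinf => ha ?_⟩ ⟨has, haU⟩)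
    exact mem_biUnion ⟨hs, hinf⟩ has
  · exact Or.inl hcov

open Filter in
theorem measure_basicClopen_eq_zero_of_treeLimit_null {μ : Measure (Ultrafilter ℕ)}
    [NullSingletonClass μ] {lam : Measure (ℕ → Bool)} [IsFiniteMeasure lam]
    {T : List Bool → Set ℕ} (hT : IsTreeOfSubsets T) {c : ℝ≥0∞} (hc : c ≠ ∞)
    (hμT : ∀ s, μ (basicClopen (T s)) ≤ c * lam (Cyl s)) {U : Set ℕ}
    (hU : lam (TreeLimit T U) = 0) : μ (basicClopen U) = 0 := by
  classical
  let D : ℕ → Set (ℕ → Bool) := fun k => {x | (T (initialWord x k) ∩ U).Infinite}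
  let S : ℕ → Finset (List Bool) := fun k =>
    (List.finite_length_eq Bool k).toFinset.filter fun s => (T s ∩ U).Infinite
  have hS : ∀ k, (S k : Set (List Bool)) = {s | s.length = k ∧ (T s ∩ U).Infinite} := fun k => by
    ext s; simp [S]
  have hD : ∀ k, D k = ⋃ s ∈ S k, Cyl s := fun k => by
    rw [← Finset.set_biUnion_coe, hS]
    exact setOf_initialWord_eq_biUnion k fun s => (T s ∩ U).Infinite
  have hanti : Antitone D := antitone_nat_of_succ_le fun k x (hx : (T _ ∩ U).Infinite) => by
    rw [initialWord_succ] at hx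
    refine (hx.sdiff (hT.1 (initialWord x k) _ (List.prefix_append _ [x k]))).mono fun a => ?_
    simp only [Set.mem_sdiff, mem_inter_iff]
    tauto
  have hlim : Tendsto (fun k => lam (D k)) atTop (𝓝 0) := by
    have hTU : TreeLimit T U = ⋂ k, D k := ext fun _ => by rw [mem_iInter]; rfl
    rw [← hU, hTU]
    exact tendsto_measure_iInter_atTop (fun k => (hD k ▸ Finset.measurableSet_biUnion _
      fun s _ => measurableSet_cyl s).nullMeasurableSet) hanti ⟨0, measure_ne_top lam _⟩
  have hbound : ∀ k, μ (basicClopen U) ≤ c * lam (D k) := fun k =>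
    calc μ (basicClopen U) ≤ μ (basicClopen (⋃ s ∈ S k, T s)) :=
          measure_basicClopen_le_of_sdiff_finite μ
            (by rw [← Finset.set_biUnion_coe, hS]; exact hT.finite_sdiff_biUnion U k)
      _ ≤ ∑ s ∈ S k, μ (basicClopen (T s)) := measure_basicClopen_biUnion_le μ _ _
      _ ≤ ∑ s ∈ S k, c * lam (Cyl s) := Finset.sum_le_sum fun s _ => hμT s
      _ = c * lam (D k) := by
          rw [← Finset.mul_sum, hD k, measure_biUnion_finset
            ((pairwiseDisjoint_cyl k).subset (by rw [hS k]; exact fun s hs => hs.1))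
            fun s _ => measurableSet_cyl s]
  simpa using ge_of_tendsto' (ENNReal.Tendsto.const_mul hlim (Or.inr hc)) hbound

/-- For every non-atomic Radon measure `μ` on `βω` there is a full tree `𝒯`
of subsets of `ω` such that `μ [U] = 0` for every `U ⊆ ω` with `T_U` Lebesgue-null in `2^ω`.
Consequently, every ultrafilter which `𝒩`-diagonalizes full trees is a μ-point of `βω`.
Here `lam` is the standard coin-flipping measure on `2^ω`, whose null sets form `𝒩`. -/
theorem tree_for_nonatomic_measure_and_diagonalizing_ultrafilters_are_muPoints
    (lam : Measure (ℕ → Bool))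
    (hlam : ∀ v : List Bool, lam (Cyl v) = (1 / 2 : ℝ≥0∞) ^ v.length) :
    (∀ μ : Measure (Ultrafilter ℕ), IsRadon μ → (∀ y : Ultrafilter ℕ, μ {y} = 0) →
      ∃ T : List Bool → Set ℕ, IsTreeOfSubsets T ∧ IsFullTree T ∧
        ∀ U : Set ℕ, lam (TreeLimit T U) = 0 → μ {x : Ultrafilter ℕ | U ∈ x} = 0) ∧
    (∀ 𝒰 : Ultrafilter ℕ,
      (∀ T : List Bool → Set ℕ, IsTreeOfSubsets T → IsFullTree T →
        ∃ X ∈ 𝒰, lam (TreeLimit T X) = 0) →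
      IsMuPoint 𝒰) := by
  have : IsProbabilityMeasure lam := ⟨by simpa [Cyl] using hlam []⟩
  have hnull : ∀ μ : Measure (Ultrafilter ℕ), IsRadon μ → (∀ y : Ultrafilter ℕ, μ {y} = 0) →
      ∃ T : List Bool → Set ℕ, IsTreeOfSubsets T ∧ IsFullTree T ∧
        ∀ U : Set ℕ, lam (TreeLimit T U) = 0 → μ (basicClopen U) = 0 := by
    rintro μ ⟨hprob, -, houter⟩ hatoms
    have : NullSingletonClass μ := ⟨hatoms⟩
    obtain ⟨T, hT, hfull, hμT⟩ := exists_fullTree_measure_basicClopen_le μ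
    refine ⟨T, hT, hfull, fun U => measure_basicClopen_eq_zero_of_treeLimit_null hT
      (add_ne_top.mpr ⟨measure_ne_top μ univ, one_ne_top⟩) fun s => ?_⟩
    rw [hlam, one_div]
    exact hμT s
  refine ⟨hnull, fun 𝒰 hdiag μ hμ hatoms => ?_⟩
  obtain ⟨T, hT, hfull, hμT⟩ := hnull μ hμ hatoms
  obtain ⟨X, hX𝒰, hX⟩ := hdiag T hT hfull
  exact ⟨basicClopen X, isOpen_basicClopen X, hX𝒰, hμT X hX⟩
end

section
/- Let ℐ be a σ-ideal on 2^ω containing all singletons. An ultrafilter 𝒰 on ω ℐ-diagonalizes trees if and only if 𝒰 is an ℐ-ultrafilter, i.e. for every function f : ω → 2^ω there is X ∈ 𝒰 such that the closure of f[X] in 2^ω belongs to ℐ. -/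
open MeasureTheory Topology ENNReal

/-!
`𝒰`-diagonalizing the tree of cylinder fibres `{n | f n ∈ [s]}` of a map `f : ω → 2^ω`
gives `X ∈ 𝒰` whose `T_X` contains every point of `closure (f[X])` except possibly points
of `f[X]` itself: a point outside `T_X` is approximated by a decreasing chain of nonempty
subsets of a finite set, so it is some `f n`. As `ℐ` is a σ-ideal with singletons, this
countable remainder is harmless. Conversely, a tree `T` yields a map sending `n` to the branch
it follows greedily (go left iff `n ∈ T (s ++ [false])`); almost every `n ∈ T s` follows `s`,
so `T_X ⊆ closure (f[X])`.
-/

open PiNat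

lemma mem_closure_iff_forall_cylinder_inter_nonempty {E : ℕ → Type*}
    [∀ n, TopologicalSpace (E n)] [∀ n, DiscreteTopology (E n)] {s : Set (∀ n, E n)}
    {x : ∀ n, E n} : x ∈ closure s ↔ ∀ n, (cylinder x n ∩ s).Nonempty := by
  rw [(isTopologicalBasis_cylinders E).mem_closure_iff]
  constructor
  · exact fun h n => h _ ⟨x, n, rfl⟩ (self_mem_cylinder x n)
  · rintro h _ ⟨y, n, rfl⟩ hx
    rw [← mem_cylinder_iff_eq.mp hx]
    exact h n

lemma ofFn_eq_ofFn_iff_mem_cylinder {α : Type*} {x y : ℕ → α} {k : ℕ} :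
    (List.ofFn fun i : Fin k => y i.val) = List.ofFn (fun i : Fin k => x i.val) ↔
      y ∈ cylinder x k := by
  simp only [List.ofFn_inj, funext_iff, Fin.forall_iff, mem_cylinder_iff]

lemma union_range_mem_of_sigma_ideal {α : Type*} {I : Set (Set α)}
    (hsigma : ∀ f : ℕ → Set α, (∀ n, f n ∈ I) → (⋃ n, f n) ∈ I)
    (hsing : ∀ x : α, {x} ∈ I)
    {A : Set α} (hA : A ∈ I) (f : ℕ → α) : A ∪ Set.range f ∈ I := by
  let u : ℕ → Set α := fun | 0 => A | n + 1 => {f n}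
  have hu : A ∪ Set.range f = ⋃ n, u n := by
    rw [← Set.union_iUnion_nat_succ, Set.iUnion_singleton_eq_range]
  rw [hu]
  exact hsigma u fun | 0 => hA | n + 1 => hsing (f n)

section FiberTree

def fiberTree (f : ℕ → ℕ → Bool) (s : List Bool) : Set ℕ :=
  {n | (List.ofFn fun i : Fin s.length => f n i.val) = s}

variable (f : ℕ → ℕ → Bool)

lemma mem_fiberTree {s : List Bool} {n : ℕ} :
    n ∈ fiberTree f s ↔ ∀ i (hi : i < s.length), f n i = s[i] := by
  simp [fiberTree, List.ext_getElem_iff]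

lemma fiberTree_ofFn (x : ℕ → Bool) (k : ℕ) :
    fiberTree f (List.ofFn fun i : Fin k => x i.val) = f ⁻¹' cylinder x k := by
  ext n
  simp only [fiberTree, List.length_ofFn, Set.mem_ofPred_eq, Set.mem_preimage]
  exact ofFn_eq_ofFn_iff_mem_cylinder

lemma isTreeOfSubsets_fiberTree : IsTreeOfSubsets (fiberTree f) := by
  refine ⟨fun s t hst => ?_, fun k => ?_, fun s t hlen hne => ?_⟩
  · refine Set.Finite.subset Set.finite_empty fun n ⟨ht, hs⟩ => hs ?_
    rw [mem_fiberTree] at ht ⊢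
    intro i hi
    rw [ht i (hi.trans_le hst.length_le), hst.getElem hi]
  · refine Set.Finite.subset Set.finite_empty fun n hn => hn ?_
    exact Set.mem_biUnion (x := List.ofFn fun i : Fin k => f n i.val) (by simp)
      (by simp [fiberTree])
  · refine Set.Finite.subset Set.finite_empty fun n ⟨hs, ht⟩ => hne ?_
    rw [← hs, ← ht, hlen]

lemma closure_image_subset_treeLimit_fiberTree_union (X : Set ℕ) :
    closure (f '' X) ⊆ TreeLimit (fiberTree f) X ∪ f '' X := by
  intro x hx
  refine or_iff_not_imp_left.mpr fun hxT => ?_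
  obtain ⟨K, hK⟩ : ∃ K, (f ⁻¹' cylinder x K ∩ X).Finite := by
    simpa [TreeLimit, fiberTree_ofFn] using hxT
  let t : ℕ → Set ℕ := fun i => f ⁻¹' cylinder x (K + i) ∩ X
  have ht_nonempty : ∀ i, (t i).Nonempty := fun i => by
    obtain ⟨_, hcyl, n, hn, rfl⟩ := mem_closure_iff_forall_cylinder_inter_nonempty.mp hx (K + i)
    exact ⟨n, hcyl, hn⟩
  have ht_anti : ∀ i, t (i + 1) ⊆ t i := fun i =>
    Set.inter_subset_inter_left X (Set.preimage_mono (cylinder_anti x (by omega)))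
  -- the chain lives in the finite, hence compact, subset `t 0` of discrete `ℕ`
  obtain ⟨n, hn⟩ := IsCompact.nonempty_iInter_of_sequence_nonempty_isCompact_isClosed t
    ht_anti ht_nonempty (by simpa [t] using hK.isCompact) fun _ => isClosed_discrete _
  rw [Set.mem_iInter] at hn
  exact ⟨n, (hn 0).2, funext fun i => (hn (i + 1)).1 i (by omega)⟩

end FiberTree

section GreedyBranch

variable (T : List Bool → Set ℕ)

open Classical in
noncomputable def greedyPrefix (n : ℕ) : ℕ → List Bool
  | 0 => []
  | k + 1 => greedyPrefix n k ++ [decide (n ∉ T (greedyPrefix n k ++ [false]))]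

open Classical in
noncomputable def greedyBranch (n : ℕ) (k : ℕ) : Bool :=
  decide (n ∉ T (greedyPrefix T n k ++ [false]))

lemma greedyPrefix_succ (n k : ℕ) :
    greedyPrefix T n (k + 1) = greedyPrefix T n k ++ [greedyBranch T n k] := rfl

lemma greedyBranch_eq_false_iff {n k : ℕ} :
    greedyBranch T n k = false ↔ n ∈ T (greedyPrefix T n k ++ [false]) := by
  simp [greedyBranch]

lemma ofFn_greedyBranch (n k : ℕ) :
    (List.ofFn fun i : Fin k => greedyBranch T n i.val) = greedyPrefix T n k := by
  induction k with
  | zero => rfl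
  | succ k ih =>
    rw [List.ofFn_succ', List.concat_eq_append, greedyPrefix_succ, ← ih]
    simp only [Fin.val_castSucc, Fin.val_last]

lemma finite_diff_setOf_greedyPrefix_eq
    (hsucc : ∀ s b, (T (s ++ [b]) \ T s).Finite)
    (hsplit : ∀ s, (T (s ++ [false]) ∩ T (s ++ [true])).Finite) (s : List Bool) :
    (T s \ {n | greedyPrefix T n s.length = s}).Finite := by
  induction s using List.reverseRecOn with
  | nil => simp [greedyPrefix]
  | append_singleton s b ih =>
    refine (((hsucc s b).union ih).union (hsplit s)).subset ?_
    rintro n ⟨hnT, hne⟩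
    by_cases hs : n ∈ T s
    · by_cases hpre : greedyPrefix T n s.length = s
      · right
        simp only [Set.mem_ofPred_eq, List.length_append, List.length_singleton,
          greedyPrefix_succ, hpre, List.append_cancel_left_eq, List.cons.injEq, and_true] at hne
        cases b
        · exact absurd ((greedyBranch_eq_false_iff T).mpr (by rwa [hpre])) hne
        · have := (greedyBranch_eq_false_iff T).mp (by simpa using hne)
          exact ⟨by rwa [hpre] at this, hnT⟩
      · exact Or.inl (Or.inr ⟨hs, hpre⟩)
    · exact Or.inl (Or.inl ⟨hnT, hs⟩)

lemma treeLimit_subset_closure_image_greedyBranch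
    (hsucc : ∀ s b, (T (s ++ [b]) \ T s).Finite)
    (hsplit : ∀ s, (T (s ++ [false]) ∩ T (s ++ [true])).Finite) (X : Set ℕ) :
    TreeLimit T X ⊆ closure (greedyBranch T '' X) := by
  intro x hx
  refine mem_closure_iff_forall_cylinder_inter_nonempty.mpr fun k => ?_
  set s := List.ofFn fun i : Fin k => x i.val
  obtain ⟨n, ⟨hnT, hnX⟩, hn⟩ :=
    ((hx k).sdiff (finite_diff_setOf_greedyPrefix_eq T hsucc hsplit s)).nonempty
  have hpre : greedyPrefix T n k = s := by simpa [s, hnT] using hn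
  refine ⟨greedyBranch T n, ?_, n, hnX, rfl⟩
  rw [← ofFn_eq_ofFn_iff_mem_cylinder, ofFn_greedyBranch, hpre]

end GreedyBranch

/-- Let `I` be a σ-ideal on `2^ω` containing all singletons. An ultrafilter
`𝒰` on `ω` `I`-diagonalizes trees if and only if `𝒰` is an `I`-ultrafilter, i.e. for every
`f : ω → 2^ω` there is `X ∈ 𝒰` with `closure (f '' X) ∈ I`. -/
theorem diagonalizes_trees_iff_I_ultrafilter
    (I : Set (Set (ℕ → Bool)))
    (hmono : ∀ s t : Set (ℕ → Bool), s ⊆ t → t ∈ I → s ∈ I)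
    (hsigma : ∀ f : ℕ → Set (ℕ → Bool), (∀ n, f n ∈ I) → (⋃ n, f n) ∈ I)
    (hsing : ∀ x : ℕ → Bool, {x} ∈ I)
    (𝒰 : Ultrafilter ℕ) :
    (∀ T : List Bool → Set ℕ, IsTreeOfSubsets T → ∃ X ∈ 𝒰, TreeLimit T X ∈ I) ↔
      (∀ f : ℕ → (ℕ → Bool), ∃ X ∈ 𝒰, closure (f '' X) ∈ I) := by
  constructor
  · intro hdiag f
    obtain ⟨X, hX, hTX⟩ := hdiag (fiberTree f) (isTreeOfSubsets_fiberTree f)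
    have hcl : closure (f '' X) ⊆ TreeLimit (fiberTree f) X ∪ Set.range f :=
      (closure_image_subset_treeLimit_fiberTree_union f X).trans
        (Set.union_subset_union_right _ (Set.image_subset_range f X))
    exact ⟨X, hX, hmono _ _ hcl (union_range_mem_of_sigma_ideal hsigma hsing hTX f)⟩
  · rintro hI T ⟨hsub, -, hdisj⟩
    obtain ⟨X, hX, hcl⟩ := hI (greedyBranch T)
    have hsucc : ∀ s b, (T (s ++ [b]) \ T s).Finite := fun s b =>
      hsub _ _ (List.prefix_append s [b])
    have hsplit : ∀ s, (T (s ++ [false]) ∩ T (s ++ [true])).Finite := fun s =>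
      hdisj _ _ (by simp) (by simp)
    exact ⟨X, hX, hmono _ _ (treeLimit_subset_closure_image_greedyBranch T hsucc hsplit X) hcl⟩
end

section
/- An ultrafilter 𝒰 on ω 𝒩-diagonalizes full trees if and only if it 𝒩-diagonalizes all trees of subsets of ω, where 𝒩 is the σ-ideal of Lebesgue-null subsets of 2^ω. -/
open MeasureTheory Topology ENNReal

/-!
Glue the given tree `T` with an auxiliary tree `S` along a set `A ∈ 𝒰`: the glued tree `T'` follows
`T` on `A` and `S` off `A`. If every node of `S` is infinite off `A`, then `T'` is full, so some
`X ∈ 𝒰` makes `T'_X` null. As `T'` and `T` agree on `A`, `T_{X ∩ A} = T'_{X ∩ A} ⊆ T'_X`, and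
`X ∩ A ∈ 𝒰`. For `A` take the parity class lying in `𝒰`, and for `S` the tree sorting `n` by the
binary digits of `n / 2`.
-/

def bitTree (s : List Bool) : Set ℕ := {n | ∀ i (hi : i < s.length), n.testBit i = s[i]}

lemma bitTree_anti {s t : List Bool} (h : s <+: t) : bitTree t ⊆ bitTree s :=
  fun _ hn i hi => (hn i (hi.trans_le h.length_le)).trans (h.getElem hi).symm

lemma mem_bitTree_ofFn (n k : ℕ) : n ∈ bitTree (List.ofFn fun i : Fin k => n.testBit i) :=
  fun _ _ => by simp

lemma eq_of_mem_bitTree {s t : List Bool} {n : ℕ} (hs : n ∈ bitTree s) (ht : n ∈ bitTree t)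
    (hlen : s.length = t.length) : s = t :=
  List.ext_getElem hlen fun i h₁ h₂ => (hs i h₁).symm.trans (ht i h₂)

lemma bitTree_nonempty : ∀ s : List Bool, (bitTree s).Nonempty
  | [] => ⟨0, fun _ hi => absurd hi (Nat.not_lt_zero _)⟩
  | b :: s => by
    obtain ⟨n, hn⟩ := bitTree_nonempty s
    refine ⟨Nat.bit b n, fun i hi => ?_⟩
    cases i with
    | zero => exact Nat.testBit_bit_zero b n
    | succ i => exact (Nat.testBit_bit_succ i b n).trans (hn i (by simpa using hi))

lemma bitTree_infinite (s : List Bool) : (bitTree s).Infinite := by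
  refine Set.infinite_of_not_bddAbove fun ⟨m, hm⟩ => ?_
  obtain ⟨n, hn⟩ := bitTree_nonempty (s ++ List.replicate m false ++ [true])
  have hbit : n.testBit (s.length + m) = true := by
    simpa using hn (s.length + m) (by simp)
  have hle : n ≤ m := hm (bitTree_anti ((List.prefix_append _ _).trans (List.prefix_append _ _)) hn)
  have hge : 2 ^ (s.length + m) ≤ n := Nat.ge_two_pow_of_testBit hbit
  have : m < 2 ^ (s.length + m) := (Nat.lt_two_pow_self).trans_le
    (Nat.pow_le_pow_right (by norm_num) (Nat.le_add_left _ _))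
  omega

lemma isTreeOfSubsets_bitTree : IsTreeOfSubsets bitTree := by
  refine ⟨fun s t h => ?_, fun k => ?_, fun s t hlen hne => ?_⟩
  · simp [Set.sdiff_eq_empty.2 (bitTree_anti h)]
  · refine Set.Finite.subset Set.finite_empty fun n hn => hn ?_
    exact Set.mem_biUnion (by simp) (mem_bitTree_ofFn n k)
  · refine Set.Finite.subset Set.finite_empty fun n ⟨hs, ht⟩ => hne ?_
    exact eq_of_mem_bitTree hs ht hlen

section Operations

variable {T S : List Bool → Set ℕ}

lemma IsTreeOfSubsets.preimage (hT : IsTreeOfSubsets T) {f : ℕ → ℕ}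
    (hf : ∀ n, (f ⁻¹' {n}).Finite) : IsTreeOfSubsets fun s => f ⁻¹' T s := by
  obtain ⟨hpre, hcov, hdisj⟩ := hT
  refine ⟨fun s t h => ?_, fun k => ?_, fun s t hlen hne => ?_⟩
  · exact (hpre s t h).preimage' fun n _ => hf n
  · rw [← Set.preimage_iUnion₂, ← Set.preimage_compl]
    exact (hcov k).preimage' fun n _ => hf n
  · exact (hdisj s t hlen hne).preimage' fun n _ => hf n

lemma IsTreeOfSubsets.ite (hT : IsTreeOfSubsets T) (hS : IsTreeOfSubsets S) (A : Set ℕ) :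
    IsTreeOfSubsets fun s => A.ite (T s) (S s) := by
  obtain ⟨hTpre, hTcov, hTdisj⟩ := hT
  obtain ⟨hSpre, hScov, hSdisj⟩ := hS
  refine ⟨fun s t h => ?_, fun k => ?_, fun s t hlen hne => ?_⟩
  · refine ((hTpre s t h).union (hSpre s t h)).subset ?_
    rintro n ⟨hn | hn, hns⟩
    · exact Or.inl ⟨hn.1, fun h' => hns (Or.inl ⟨h', hn.2⟩)⟩
    · exact Or.inr ⟨hn.1, fun h' => hns (Or.inr ⟨h', hn.2⟩)⟩
  · refine ((hTcov k).union (hScov k)).subset fun n hn => ?_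
    simp only [Set.mem_compl_iff, Set.mem_iUnion, Set.mem_union,
      Set.mem_ofPred_eq, not_exists] at hn ⊢
    by_cases hA : n ∈ A
    · exact Or.inl fun s hs h => hn s hs (Or.inl ⟨h, hA⟩)
    · exact Or.inr fun s hs h => hn s hs (Or.inr ⟨h, hA⟩)
  · rw [← Set.ite_inter_inter]
    exact ((hTdisj s t hlen hne).union (hSdisj s t hlen hne)).subset (Set.ite_subset_union _ _ _)

lemma isFullTree_ite {A : Set ℕ} (h : ∀ s, (S s \ A).Infinite) :
    IsFullTree fun s => A.ite (T s) (S s) :=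
  fun s => (h s).mono Set.subset_union_right

lemma treeLimit_mono {X Y : Set ℕ} (h : X ⊆ Y) : TreeLimit T X ⊆ TreeLimit T Y :=
  fun _ hx k => (hx k).mono (Set.inter_subset_inter_right _ h)

lemma treeLimit_ite_inter (A X : Set ℕ) :
    TreeLimit (fun s => A.ite (T s) (S s)) (X ∩ A) = TreeLimit T (X ∩ A) := by
  ext x
  simp only [TreeLimit, Set.mem_ofPred_eq, Set.inter_comm X A, ← Set.inter_assoc,
    Set.ite_inter_self]

end Operations

lemma isTreeOfSubsets_bitTree_div_two : IsTreeOfSubsets fun s => (· / 2) ⁻¹' bitTree s :=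
  isTreeOfSubsets_bitTree.preimage fun n =>
    (Set.finite_Iic (2 * n + 1)).subset fun k hk => by
      simp only [Set.mem_preimage, Set.mem_singleton_iff] at hk
      simp only [Set.mem_Iic]; omega

lemma bitTree_div_two_diff_infinite {A : Set ℕ} {c : ℕ} (hc : c < 2) (hA : ∀ m, 2 * m + c ∉ A)
    (s : List Bool) : ((· / 2) ⁻¹' bitTree s \ A).Infinite := by
  have hinj : Set.InjOn (fun m => 2 * m + c) (bitTree s) := fun a _ b _ h => by
    simp only at h; omega
  refine ((bitTree_infinite s).image hinj).mono ?_
  rintro _ ⟨m, hm, rfl⟩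
  exact ⟨by simpa [show (2 * m + c) / 2 = m by omega] using hm, hA m⟩

lemma exists_tree_infinite_diff_mem (𝒰 : Ultrafilter ℕ) :
    ∃ A ∈ 𝒰, ∃ S, IsTreeOfSubsets S ∧ ∀ s, (S s \ A).Infinite := by
  rcases 𝒰.mem_or_compl_mem {n | Even n} with h | h
  · exact ⟨_, h, _, isTreeOfSubsets_bitTree_div_two,
      bitTree_div_two_diff_infinite one_lt_two fun m => by simp [parity_simps]⟩
  · exact ⟨_, h, _, isTreeOfSubsets_bitTree_div_two,
      bitTree_div_two_diff_infinite two_pos fun m => by simp⟩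

theorem diagonalizes_full_trees_iff_diagonalizes_trees_general
    (lam : Measure (ℕ → Bool))
    (𝒰 : Ultrafilter ℕ) :
    (∀ T : List Bool → Set ℕ, IsTreeOfSubsets T → IsFullTree T →
        ∃ X ∈ 𝒰, lam (TreeLimit T X) = 0) ↔
      (∀ T : List Bool → Set ℕ, IsTreeOfSubsets T → ∃ X ∈ 𝒰, lam (TreeLimit T X) = 0) := by
  refine ⟨fun hfull T hT => ?_, fun h T hT _ => h T hT⟩
  obtain ⟨A, hA, S, hS, hSA⟩ := exists_tree_infinite_diff_mem 𝒰
  obtain ⟨X, hX, hnull⟩ := hfull _ (hT.ite hS A) (isFullTree_ite hSA)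
  refine ⟨X ∩ A, Filter.inter_mem hX hA, measure_mono_null ?_ hnull⟩
  rw [← treeLimit_ite_inter A X (S := S)]
  exact treeLimit_mono Set.inter_subset_left

/-- An ultrafilter `𝒰` on `ω` `𝒩`-diagonalizes full trees if and only if it
`𝒩`-diagonalizes all trees of subsets of `ω`; here `lam` is the standard coin-flipping measure
on `2^ω`, whose null sets form the σ-ideal `𝒩`. -/
theorem diagonalizes_full_trees_iff_diagonalizes_trees
    (lam : Measure (ℕ → Bool))
    (hlam : ∀ v : List Bool, lam (Cyl v) = (1 / 2 : ℝ≥0∞) ^ v.length)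
    (𝒰 : Ultrafilter ℕ) :
    (∀ T : List Bool → Set ℕ, IsTreeOfSubsets T → IsFullTree T →
        ∃ X ∈ 𝒰, lam (TreeLimit T X) = 0) ↔
      (∀ T : List Bool → Set ℕ, IsTreeOfSubsets T → ∃ X ∈ 𝒰, lam (TreeLimit T X) = 0) :=
  diagonalizes_full_trees_iff_diagonalizes_trees_general lam 𝒰
end
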